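/- arXiv:2504.14713 — 9 statements merged into one kernel-verified Lean document; each statement's English description precedes it below -/
import Mathlib

section
/- For every n ≥ 2, the number of derangements of [n] whose flattened form avoids the vincular pattern 13-2 equals the Fibonacci number f_{n-2}, where f_0 = f_1 = 1 and f_m = f_{m-1} + f_{m-2}. -/
open Finset Polynomial

open scoped Classical

/-- Auxiliary function: walk along the cycles of `π` in standard cycle form order,
starting from `cur`, having already visited `visited`, with `fuel` steps remaining. -/
def flatAux {n : ℕ} (π : Equiv.Perm (Fin n)) : ℕ → Fin n → Finset (Fin n) → List (Fin n)
  | 0, _, _ => []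
  | fuel+1, cur, visited =>
    cur ::
      (if π cur ∈ insert cur visited then
        (if h : (Finset.univ \ insert cur visited).Nonempty then
          flatAux π fuel ((Finset.univ \ insert cur visited).min' h) (insert cur visited)
        else [])
      else flatAux π fuel (π cur) (insert cur visited))

/-- The flattened form of a permutation of `{1,...,n}` (represented on `Fin n`):
write the standard cycle form (each cycle starting with its least element, cycles in
increasing order of least elements), erase parentheses, and read the word with
letters `1,...,n`. -/
def flat {n : ℕ} (π : Equiv.Perm (Fin n)) : List ℕ :=
  if h : 0 < n then (flatAux π n ⟨0, h⟩ ∅).map (fun x => (x : ℕ) + 1) else []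

/-- A derangement: a fixed-point-free permutation. -/
def isDerangement {n : ℕ} (π : Equiv.Perm (Fin n)) : Prop := ∀ i, π i ≠ i

/-- Number of (disjoint, nontrivial) cycles of a permutation. -/
def numCycles {n : ℕ} (π : Equiv.Perm (Fin n)) : ℕ := π.cycleType.card

def contains13_2 (w : List ℕ) : Prop :=
  ∃ i j : Fin w.length, (i : ℕ) + 1 < (j : ℕ) ∧
    w.getD (i : ℕ) 0 < w.getD (j : ℕ) 0 ∧ w.getD (j : ℕ) 0 < w.getD ((i : ℕ) + 1) 0

lemma flatAux_one {n : ℕ} (π : Equiv.Perm (Fin n)) (c : Fin n) (v : Finset (Fin n)) :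
    flatAux π 1 c v = [c] := by
  simp only [flatAux]
  split <;> [skip; rfl]
  split <;> rfl

/-- Everything unvisited appears in the output, given enough fuel. -/
lemma flatAux_cover {n : ℕ} (π : Equiv.Perm (Fin n)) :
    ∀ (fuel : ℕ) (cur : Fin n) (visited : Finset (Fin n)), cur ∉ visited →
      n ≤ visited.card + fuel → ∀ x : Fin n, x ∉ visited → x ∈ flatAux π fuel cur visited := by
  intro fuel
  induction fuel with
  | zero =>
      intro cur visited hc hcard x hx
      exfalso
      have : visited = Finset.univ := by
        apply Finset.eq_univ_of_card
        have := Finset.card_le_univ visited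
        simp [Fintype.card_fin] at *
        omega
      exact hx (this ▸ Finset.mem_univ x)
  | succ fuel ih =>
      intro cur visited hc hcard x hx
      rcases eq_or_ne x cur with rfl | hne
      · simp [flatAux]
      have hx' : x ∉ insert cur visited := by simp [hne, hx]
      have hcard' : n ≤ (insert cur visited).card + fuel := by
        rw [Finset.card_insert_of_notMem hc]; omega
      simp only [flatAux, List.mem_cons]
      right
      split
      · split
        · next h =>
            exact ih _ _ (by have := Finset.min'_mem _ h; simp only [Finset.mem_sdiff] at this; exact this.2) hcard' x hx'
        · next h =>
            exfalso
            rw [Finset.not_nonempty_iff_eq_empty, Finset.sdiff_eq_empty_iff_subset] at h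
            exact hx' (h (Finset.mem_univ x))
      · next h => exact ih _ _ h hcard' x hx'
def Vk (n k : ℕ) : Finset (Fin n) := Finset.univ.filter (fun x => (x : ℕ) < k)

lemma insert_Vk {n k : ℕ} (hk : k < n) : insert (⟨k, hk⟩ : Fin n) (Vk n k) = Vk n (k+1) := by
  ext x
  simp [Vk, Fin.ext_iff]
  omega

lemma walk {n : ℕ} (π : Equiv.Perm (Fin n)) (h0 : 0 < n) (k : ℕ) (hk : k < n)
    (h : ∀ y : Fin n, (y : ℕ) < k → ((π y : ℕ) = (y : ℕ) + 1 ∨ π y ≤ y)) :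
    ∃ l : List (Fin n), flatAux π n ⟨0, h0⟩ ∅ = l ++ flatAux π (n - k) ⟨k, hk⟩ (Vk n k) ∧
      l.map Fin.val = List.range k := by
  induction k with
  | zero =>
      refine ⟨[], ?_, rfl⟩
      have : Vk n 0 = ∅ := by ext x; simp [Vk]
      simp [this]
  | succ k ihk =>
      have hk' : k < n := by omega
      obtain ⟨l, hl, hlm⟩ := ihk hk' (fun y hy => h y (by omega))
      set c : Fin n := ⟨k, hk'⟩ with hc
      have hnk : n - k = (n - (k+1)) + 1 := by omega
      have hins : insert c (Vk n k) = Vk n (k+1) := insert_Vk hk'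
      have hstep : flatAux π (n - k) c (Vk n k) =
          c :: flatAux π (n - (k+1)) ⟨k+1, hk⟩ (Vk n (k+1)) := by
        rw [hnk]
        simp only [flatAux, hins]
        rcases h c (Nat.lt_succ_self k) with h1 | h1
        · have hmem : π c ∉ Vk n (k+1) := by
            simp [Vk, h1, hc]
            exact Nat.lt_of_succ_le (le_of_eq h1.symm)
          rw [if_neg hmem]
          have : π c = ⟨k+1, hk⟩ := Fin.ext (by rw [h1])
          rw [this]
        · have hmem : π c ∈ Vk n (k+1) := by
            simp only [Vk, Finset.mem_filter, Finset.mem_univ, true_and]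
            have : (π c : ℕ) ≤ k := h1
            omega
          rw [if_pos hmem]
          have hne : (Finset.univ \ Vk n (k+1)).Nonempty := by
            refine ⟨⟨k+1, hk⟩, ?_⟩
            simp [Vk]
          rw [dif_pos hne]
          have hmin : (Finset.univ \ Vk n (k+1)).min' hne = ⟨k+1, hk⟩ := by
            apply le_antisymm
            · exact Finset.min'_le _ _ (by simp [Vk])
            · apply Finset.le_min'
              intro y hy
              simp only [Finset.mem_sdiff, Finset.mem_univ, true_and, Vk, Finset.mem_filter,
                not_lt] at hy
              exact hy
          rw [hmin]
      refine ⟨l ++ [c], ?_, ?_⟩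
      · rw [hl, hstep]; simp
      · rw [List.map_append, hlm, List.range_succ]
        simp
        rfl
lemma map_coeM {n : ℕ} (l : List (Fin n)) :
    (List.map (fun x => x + 1) (do let a ← l; pure a.val) : List ℕ) = l.map (fun x => x.val + 1) := by
  show List.map _ (l.flatMap _) = _
  induction l with
  | nil => rfl
  | cons a t ih => simpa using ih

lemma flat_eq {n : ℕ} (π : Equiv.Perm (Fin n)) (h : 0 < n) :
    flat π = (flatAux π n ⟨0, h⟩ ∅).map (fun x => x.val + 1) := by
  rw [flat, dif_pos h, map_coeM]

lemma getD_concat (a b : List ℕ) (k : ℕ) (h : k < b.length) :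
    (a ++ b).getD (a.length + k) 0 = b.getD k 0 := by
  rw [List.getD_eq_getElem _ _ (by simp only [List.length_append]; omega),
    List.getElem_append_right (by omega), List.getD_eq_getElem _ _ h]
  congr 1
  omega

def GoodP {n : ℕ} (π : Equiv.Perm (Fin n)) : Prop :=
  ∀ x : Fin n, (π x : ℕ) = (x : ℕ) + 1 ∨ π x ≤ x

lemma card_Vk {n k : ℕ} (hk : k ≤ n) : (Vk n k).card = k := by
  have h : ∀ m ∈ Finset.range k, m < n := fun m hm => by
    simp only [Finset.mem_range] at hm; omega
  have : Vk n k = (Finset.range k).attachFin h := by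
    ext x; simp [Vk, Finset.mem_attachFin]
  rw [this, Finset.card_attachFin, Finset.card_range]

lemma flat_of_good {n : ℕ} (π : Equiv.Perm (Fin n)) (hg : GoodP π) :
    flat π = (List.range n).map (· + 1) := by
  rcases Nat.eq_zero_or_pos n with rfl | h0
  · simp [flat]
  rw [flat_eq π h0]
  have hk : n - 1 < n := by omega
  obtain ⟨l, hl, hlm⟩ := walk π h0 (n-1) hk (fun y _ => hg y)
  have h1 : n - (n - 1) = 1 := by omega
  rw [hl, h1, flatAux_one]
  have h2 : (l ++ [(⟨n-1, hk⟩ : Fin n)]).map (fun x => x.val + 1)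
      = ((l ++ [(⟨n-1, hk⟩ : Fin n)]).map Fin.val).map (· + 1) := by
    rw [List.map_map]; rfl
  rw [h2, List.map_append, hlm]
  have h4 : List.range n = List.range (n-1) ++ [n-1] := by
    rw [← List.range_succ]
    congr 1
    omega
  rw [h4]
  simp

lemma getD_range_map {n k : ℕ} (hk : k < n) :
    (((List.range n).map (· + 1)).getD k 0) = k + 1 := by
  rw [List.getD_eq_getElem _ _ (by simpa using hk), List.getElem_map, List.getElem_range]

lemma avoid_of_good {n : ℕ} (π : Equiv.Perm (Fin n)) (hg : GoodP π) :
    ¬ contains13_2 (flat π) := by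
  rw [flat_of_good π hg]
  rintro ⟨i, j, hij, h1, h2⟩
  have hjl : (j : ℕ) < n := by have := j.isLt; simpa using this
  have hil : (i : ℕ) < n := by have := i.isLt; simpa using this
  rw [getD_range_map hjl, getD_range_map hil, getD_range_map (by omega : (i:ℕ)+1 < n)] at *
  omega

lemma contains_of_not_good {n : ℕ} (π : Equiv.Perm (Fin n)) (hb : ¬ GoodP π) :
    contains13_2 (flat π) := by
  classical
  -- minimal bad element
  have hS : (Finset.univ.filter (fun x : Fin n => ¬ ((π x : ℕ) = (x : ℕ) + 1 ∨ π x ≤ x))).Nonempty := by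
    rw [GoodP] at hb; push_neg at hb
    obtain ⟨x, hx⟩ := hb
    refine ⟨x, ?_⟩
    simp only [Finset.mem_filter, Finset.mem_univ, true_and]
    intro h
    rcases h with h | h
    · exact hx.1 h
    · exact absurd hx.2 (not_lt.mpr h)
  set S := Finset.univ.filter (fun x : Fin n => ¬ ((π x : ℕ) = (x : ℕ) + 1 ∨ π x ≤ x)) with hSdef
  set x := S.min' hS with hxdef
  have hxS : x ∈ S := Finset.min'_mem _ _
  rw [hSdef, Finset.mem_filter] at hxS
  have hxbad := hxS.2
  push_neg at hxbad
  have hge : (x : ℕ) + 2 ≤ (π x : ℕ) := by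
    have h1 := hxbad.1
    have h2 : (x : ℕ) < (π x : ℕ) := hxbad.2
    omega
  have hmin : ∀ y : Fin n, (y : ℕ) < (x : ℕ) → ((π y : ℕ) = (y : ℕ) + 1 ∨ π y ≤ y) := by
    intro y hy
    by_contra hc
    have : x ≤ y := Finset.min'_le _ _ (by rw [hSdef, Finset.mem_filter]; exact ⟨Finset.mem_univ _, hc⟩)
    exact absurd hy (by rw [Fin.le_def] at this; omega)
  have h0 : 0 < n := x.pos
  have hk : (x : ℕ) < n := x.isLt
  have hx2 : (x : ℕ) + 2 < n := lt_of_le_of_lt hge (π x).isLt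
  obtain ⟨l, hl, hlm⟩ := walk π h0 (x : ℕ) hk hmin
  have hlen : l.length = (x : ℕ) := by
    have := congrArg List.length hlm
    simpa using this
  set rest := flatAux π (n - (x : ℕ) - 1) (π x) (Vk n ((x : ℕ) + 1)) with hrestdef
  have hπnotin : π x ∉ Vk n ((x : ℕ) + 1) := by
    simp only [Vk, Finset.mem_filter, Finset.mem_univ, true_and, not_lt]
    omega
  have hstep : flatAux π (n - (x : ℕ)) ⟨(x : ℕ), hk⟩ (Vk n (x : ℕ)) = x :: rest := by
    rw [show n - (x : ℕ) = (n - (x : ℕ) - 1) + 1 from by omega]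
    simp only [flatAux, insert_Vk hk]
    rw [if_neg hπnotin, hrestdef]
  have hL : flatAux π n ⟨0, h0⟩ ∅ = l ++ x :: rest := by rw [hl, hstep]
  -- the value x+1 occurs in rest
  have hzmem : (⟨(x : ℕ) + 1, by omega⟩ : Fin n) ∈ rest := by
    apply flatAux_cover π _ _ _ hπnotin
    · rw [card_Vk (by omega)]; omega
    · simp [Vk]; exact Fin.lt_def.mpr (Nat.lt_succ_self _)
  obtain ⟨i, hi, hiz⟩ := List.getElem_of_mem hzmem
  have hrest0 : ∃ t, rest = π x :: t := by
    rw [hrestdef, show n - (x : ℕ) - 1 = (n - (x : ℕ) - 2) + 1 from by omega]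
    exact ⟨_, rfl⟩
  obtain ⟨t, ht⟩ := hrest0
  have hi1 : 1 ≤ i := by
    rcases Nat.eq_zero_or_pos i with rfl | h
    · exfalso
      simp only [ht, List.getElem_cons_zero] at hiz
      have := congrArg Fin.val hiz
      simp only at this
      omega
    · exact h
  -- now compute the word
  set f : Fin n → ℕ := fun z => z.val + 1 with hf
  have hwdef : flat π = (l.map f) ++ ((x :: rest).map f) := by
    rw [flat_eq π h0, hL, List.map_append]
  have hlf : (l.map f).length = (x : ℕ) := by rw [List.length_map, hlen]
  have hget : ∀ k, k < ((x :: rest).map f).length →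
      (flat π).getD ((x : ℕ) + k) 0 = ((x :: rest).map f).getD k 0 := by
    intro k hk'
    rw [hwdef, ← hlf]
    exact getD_concat _ _ _ hk'
  have hlen2 : ((x :: rest).map f).length = rest.length + 1 := by simp
  have g1 : (flat π).getD (x : ℕ) 0 = (x : ℕ) + 1 := by
    have := hget 0 (by omega)
    simpa [hf] using this
  have g2 : (flat π).getD ((x : ℕ) + 1) 0 = (π x : ℕ) + 1 := by
    have := hget 1 (by omega)
    rw [this, ht]
    simp [hf]
  have g3 : (flat π).getD ((x : ℕ) + 1 + i) 0 = (x : ℕ) + 2 := by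
    have := hget (i + 1) (by omega)
    rw [show (x : ℕ) + 1 + i = (x : ℕ) + (i + 1) from by omega, this]
    rw [List.getD_eq_getElem _ _ (by simp only [List.length_map, List.length_cons]; omega)]
    simp only [List.getElem_map, List.getElem_cons_succ]
    rw [hiz]
  have hwlen : (flat π).length = (x : ℕ) + 1 + rest.length := by
    rw [hwdef]
    simp [hlen]
    omega
  refine ⟨⟨(x : ℕ), by omega⟩, ⟨(x : ℕ) + 1 + i, by omega⟩, by simp; omega, ?_, ?_⟩
  · simp only []
    rw [g1, g3]
    omega
  · simp only []
    rw [g3, g2]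
    omega
def Bset (m : ℕ) : Finset (Finset ℕ) :=
  (Finset.range m).powerset.filter (fun F => ∀ x ∈ F, x + 1 ∉ F)

lemma card_Bset : ∀ m : ℕ, (Bset m).card = Nat.fib (m + 2) := by
  intro m
  induction m using Nat.strong_induction_on with
  | _ m ih =>
    match m with
    | 0 =>
        have : Bset 0 = {∅} := by
          ext F
          simp [Bset, Finset.subset_empty]
          intro h
          subst h
          simp
        rw [this]
        simp
    | 1 =>
        have : Bset 1 = {∅, {0}} := by
          ext F
          simp only [Bset, Finset.mem_filter, Finset.mem_powerset, Finset.range_one,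
            Finset.mem_insert, Finset.mem_singleton]
          constructor
          · rintro ⟨hsub, -⟩
            rcases Finset.subset_singleton_iff.mp hsub with rfl | rfl
            · exact Or.inl rfl
            · exact Or.inr rfl
          · rintro (rfl | rfl) <;> simp
        rw [this]
        rw [Finset.card_insert_of_notMem (by
          simp only [Finset.mem_singleton]
          intro h
          exact absurd (h ▸ Finset.mem_singleton_self 0) (by simp)), Finset.card_singleton]
        rfl
    | (m+2) =>
        have hsplit := Finset.card_filter_add_card_filter_not
          (s := Bset (m+2)) (p := fun F => m + 1 ∈ F)
        have h1 : (Bset (m+2)).filter (fun F => ¬ (m + 1 ∈ F)) = Bset (m+1) := by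
          ext F
          simp only [Bset, Finset.mem_filter, Finset.mem_powerset]
          constructor
          · rintro ⟨⟨hsub, hc⟩, hni⟩
            refine ⟨?_, hc⟩
            intro x hx
            have := hsub hx
            simp only [Finset.mem_range] at this ⊢
            rcases Nat.lt_succ_iff_lt_or_eq.mp this with h | h
            · exact h
            · exact absurd (h ▸ hx) hni
          · rintro ⟨hsub, hc⟩
            have hni : m + 1 ∉ F := fun h => by simpa using hsub h
            exact ⟨⟨hsub.trans (by intro x; simp; omega), hc⟩, hni⟩
        have h2 : ((Bset (m+2)).filter (fun F => m + 1 ∈ F)).card = (Bset m).card := by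
          refine Finset.card_bij' (fun F _ => F.erase (m+1)) (fun F _ => insert (m+1) F)
            ?_ ?_ ?_ ?_
          · intro F hF
            simp only [Bset, Finset.mem_filter, Finset.mem_powerset] at hF ⊢
            obtain ⟨⟨hsub, hc⟩, hmem⟩ := hF
            have hm : m ∉ F := fun h => hc m h hmem
            constructor
            · intro x hx
              simp only [Finset.mem_erase] at hx
              have := hsub hx.2
              simp only [Finset.mem_range] at this ⊢
              rcases eq_or_ne x m with rfl | hne
              · exact absurd hx.2 hm
              · omega
            · intro x hx
              simp only [Finset.mem_erase] at hx ⊢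
              intro hx1
              exact hc x hx.2 hx1.2
          · intro F hF
            simp only [Bset, Finset.mem_filter, Finset.mem_powerset] at hF ⊢
            obtain ⟨hsub, hc⟩ := hF
            refine ⟨⟨?_, ?_⟩, by simp⟩
            · intro x hx
              simp only [Finset.mem_insert] at hx
              rcases hx with rfl | hx
              · simp
              · have := hsub hx
                simp only [Finset.mem_range] at this ⊢
                omega
            · intro x hx
              simp only [Finset.mem_insert] at hx ⊢
              rintro (h | h)
              · rcases hx with rfl | hx
                · omega
                · have := hsub hx; simp only [Finset.mem_range] at this; omega
              · rcases hx with rfl | hx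
                · have := hsub h; simp only [Finset.mem_range] at this; omega
                · exact hc x hx h
          · intro F hF
            simp only [Bset, Finset.mem_filter] at hF
            exact Finset.insert_erase hF.2
          · intro F hF
            simp only [Bset, Finset.mem_filter, Finset.mem_powerset] at hF
            apply Finset.erase_insert
            intro h
            have := hF.1 h
            simp at this
        rw [show m + 2 + 2 = (m + 2) + 2 from rfl, Nat.fib_add_two,
          ← ih (m+1) (by omega), ← ih m (by omega), ← hsplit, h1, h2]
def Aset (n : ℕ) : Finset (Finset ℕ) :=
  (Finset.range n).powerset.filter (fun E => (n-1) ∈ E ∧ 0 ∉ E ∧ ∀ e ∈ E, e + 1 ∉ E)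

lemma mem_Aset {n : ℕ} {E : Finset ℕ} : E ∈ Aset n ↔
    (∀ e ∈ E, e < n) ∧ (n-1) ∈ E ∧ 0 ∉ E ∧ ∀ e ∈ E, e + 1 ∉ E := by
  simp only [Aset, Finset.mem_filter, Finset.mem_powerset, Finset.subset_iff, Finset.mem_range]

lemma Aset_small {n : ℕ} (hn : 2 ≤ n) {E : Finset ℕ} (hE : E ∈ Aset n) :
    ∀ e ∈ E, e ≠ n - 1 → e ≤ n - 3 ∧ 1 ≤ e := by
  rw [mem_Aset] at hE
  obtain ⟨hlt, hm, h0, hnc⟩ := hE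
  intro e he hne
  have h1 : 1 ≤ e := by rcases Nat.eq_zero_or_pos e with rfl | h; exact absurd he h0; exact h
  have h2 : e < n := hlt e he
  refine ⟨?_, h1⟩
  by_contra hgt
  have : e = n - 2 := by omega
  subst this
  have : n - 2 + 1 = n - 1 := by omega
  exact hnc _ he (this ▸ hm)

lemma card_Aset (n : ℕ) (hn : 2 ≤ n) : (Aset n).card = Nat.fib (n - 1) := by
  have hcard : (Aset n).card = (Bset (n-3)).card := by
    refine Finset.card_bij' (fun E _ => (E.erase (n-1)).image (· - 1))
      (fun F _ => insert (n-1) (F.image (· + 1))) ?_ ?_ ?_ ?_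
    · -- forward welldef
      intro E hE
      unfold Bset
      simp only [Finset.mem_filter, Finset.mem_powerset]
      constructor
      · intro x hx
        simp only [Finset.mem_image, Finset.mem_erase] at hx
        obtain ⟨e, ⟨hne, he⟩, rfl⟩ := hx
        have := Aset_small hn hE e he hne
        simp only [Finset.mem_range]
        omega
      · intro x hx hx1
        simp only [Finset.mem_image, Finset.mem_erase] at hx hx1
        obtain ⟨e, ⟨hne, he⟩, rfl⟩ := hx
        obtain ⟨e', ⟨hne', he'⟩, heq⟩ := hx1
        have h1 := Aset_small hn hE e he hne
        have h2 := Aset_small hn hE e' he' hne'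
        have : e' = e + 1 := by omega
        subst this
        exact (mem_Aset.mp hE).2.2.2 e he he'
    · -- backward welldef
      intro F hF
      unfold Bset at hF
      simp only [Finset.mem_filter, Finset.mem_powerset] at hF
      obtain ⟨hsub, hnc⟩ := hF
      rw [mem_Aset]
      have hrange : ∀ f ∈ F, f < n - 3 := fun f hf => by
        have := hsub hf; simpa using this
      refine ⟨?_, by simp, ?_, ?_⟩
      · intro e he
        simp only [Finset.mem_insert, Finset.mem_image] at he
        rcases he with rfl | ⟨f, hf, rfl⟩
        · omega
        · have := hrange f hf; omega
      · intro h0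
        simp only [Finset.mem_insert, Finset.mem_image] at h0
        rcases h0 with h | ⟨f, hf, hf1⟩
        · omega
        · omega
      · intro e he
        simp only [Finset.mem_insert, Finset.mem_image] at he ⊢
        rintro (h | ⟨f, hf, hf1⟩)
        · rcases he with rfl | ⟨f, hf, rfl⟩
          · omega
          · have := hrange f hf; omega
        · rcases he with rfl | ⟨f', hf', rfl⟩
          · have := hrange f hf; omega
          · have : f = f' + 1 := by omega
            subst this
            exact hnc f' hf' hf
    · -- left inverse
      intro E hE
      ext v
      simp only [Finset.mem_insert, Finset.mem_image, Finset.mem_erase]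
      constructor
      · rintro (rfl | ⟨x, ⟨e, ⟨hne, he⟩, rfl⟩, rfl⟩)
        · exact (mem_Aset.mp hE).2.1
        · have := Aset_small hn hE e he hne
          have : e - 1 + 1 = e := by omega
          rwa [this]
      · intro hv
        rcases eq_or_ne v (n-1) with rfl | hne
        · exact Or.inl rfl
        · right
          refine ⟨v - 1, ⟨v, ⟨hne, hv⟩, rfl⟩, ?_⟩
          have := Aset_small hn hE v hv hne
          omega
    · -- right inverse
      intro F hF
      unfold Bset at hF
      simp only [Finset.mem_filter, Finset.mem_powerset] at hF
      have hrange : ∀ f ∈ F, f < n - 3 := fun f hf => by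
        have := hF.1 hf; simpa using this
      ext v
      simp only [Finset.mem_image, Finset.mem_erase, Finset.mem_insert]
      constructor
      · rintro ⟨x, ⟨hne, (h | ⟨f, hf, rfl⟩)⟩, rfl⟩
        · exact absurd h hne
        · have := hrange f hf
          have : f + 1 - 1 = f := by omega
          rwa [this]
      · intro hv
        refine ⟨v + 1, ⟨?_, Or.inr ⟨v, hv, rfl⟩⟩, by omega⟩
        have := hrange v hv
        omega
  rw [hcard, card_Bset]
  rcases eq_or_ne n 2 with rfl | hne
  · rfl
  · congr 1
    omega
noncomputable def psN (E : Finset ℕ) (x : ℕ) : ℕ :=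
  if h : (E.filter (· < x)).Nonempty then (E.filter (· < x)).max' h + 1 else 0

lemma psN_le (E : Finset ℕ) (x : ℕ) : psN E x ≤ x := by
  rw [psN]
  split
  · next h =>
      have := Finset.max'_mem _ h
      simp only [Finset.mem_filter] at this
      omega
  · omega

lemma psN_lt {E : Finset ℕ} {x : ℕ} (h0 : 0 ∉ E) (hnc : ∀ e ∈ E, e + 1 ∉ E)
    (hx : x ∈ E) : psN E x < x := by
  rw [psN]
  split
  · next h =>
      have hm := Finset.max'_mem _ h
      simp only [Finset.mem_filter] at hm
      rcases Nat.lt_or_ge ((E.filter (· < x)).max' h + 1) x with h' | h'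
      · exact h'
      · exfalso
        have heq : (E.filter (· < x)).max' h + 1 = x := by omega
        exact hnc _ hm.1 (by rw [heq]; exact hx)
  · rcases Nat.eq_zero_or_pos x with rfl | h
    · exact absurd hx h0
    · omega

/-- The set of "ends" of a permutation, as natural numbers. -/
def EndSet {n : ℕ} (π : Equiv.Perm (Fin n)) : Finset ℕ :=
  (Finset.univ.filter (fun x : Fin n => π x < x)).image Fin.val

lemma mem_EndSet {n : ℕ} {π : Equiv.Perm (Fin n)} {v : ℕ} :
    v ∈ EndSet π ↔ ∃ hv : v < n, π ⟨v, hv⟩ < ⟨v, hv⟩ := by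
  simp only [EndSet, Finset.mem_image, Finset.mem_filter, Finset.mem_univ, true_and]
  constructor
  · rintro ⟨x, hx, rfl⟩
    exact ⟨x.isLt, by simpa using hx⟩
  · rintro ⟨hv, h⟩
    exact ⟨⟨v, hv⟩, h, rfl⟩

/-- Structure lemma: in a good derangement, every "end" maps to one more than
the previous end (or to 0). -/
lemma struct {n : ℕ} (π : Equiv.Perm (Fin n)) (hd : isDerangement π) (hg : GoodP π) :
    ∀ (m : ℕ) (x : Fin n), (x : ℕ) < m → π x < x → (π x : ℕ) = psN (EndSet π) (x : ℕ) := by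
  intro m
  induction m with
  | zero => intro x hx; omega
  | succ m ih =>
    intro x hxm hend
    set E := EndSet π with hE
    set v := (π x : ℕ) with hv
    have hvx : v < (x : ℕ) := hend
    -- every positive value of an end is preceded by an end
    have claimA : 1 ≤ v → v - 1 ∈ E := by
      intro h1
      set y : Fin n := ⟨v - 1, by omega⟩ with hy
      by_cases hyE : π y < y
      · rw [mem_EndSet]; exact ⟨by omega, hyE⟩
      · exfalso
        have : (π y : ℕ) = (y : ℕ) + 1 := by
          rcases hg y with h | h
          · exact h
          · rcases lt_or_eq_of_le h with h' | h'
            · exact absurd h' hyE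
            · exact absurd h' (hd y)
        have hyval : (y : ℕ) = v - 1 := rfl
        have hpy : π y = π x := by
          apply Fin.ext
          omega
        have : y = x := π.injective hpy
        have : (y : ℕ) = (x : ℕ) := by rw [this]
        simp only [hy] at this
        omega
    rcases Nat.eq_zero_or_pos v with hv0 | hv1
    · -- v = 0 : show no end below x
      rw [psN]
      split
      · next h =>
          exfalso
          set e := (E.filter (· < (x : ℕ))).min' h with he
          have hem := Finset.min'_mem _ h
          simp only [Finset.mem_filter] at hem
          obtain ⟨heE, hex⟩ := hem
          rw [mem_EndSet] at heE
          obtain ⟨hen, hee⟩ := heE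
          have hrec : (π ⟨e, hen⟩ : ℕ) = psN E e := ih ⟨e, hen⟩ (by simp; omega) hee
          have hpse : psN E e = 0 := by
            rw [psN]
            split
            · next h2 =>
                exfalso
                have hm2 := Finset.min'_mem _ h2
                simp only [Finset.mem_filter] at hm2
                have : e ≤ (E.filter (· < e)).min' h2 := by
                  apply Finset.min'_le
                  simp only [Finset.mem_filter]
                  exact ⟨hm2.1, by omega⟩
                omega
            · rfl
          have : π ⟨e, hen⟩ = π x := Fin.ext (by rw [hrec, hpse]; omega)
          have := π.injective this
          have : e = (x : ℕ) := congrArg Fin.val this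
          omega
      · omega
    · -- v ≥ 1
      have hv1E : v - 1 ∈ E := claimA hv1
      have hne : (E.filter (· < (x : ℕ))).Nonempty :=
        ⟨v - 1, by simp only [Finset.mem_filter]; exact ⟨hv1E, by omega⟩⟩
      rw [psN, dif_pos hne]
      set M := (E.filter (· < (x : ℕ))).max' hne with hM
      have hMv : v - 1 ≤ M := Finset.le_max' _ _ (by simp only [Finset.mem_filter]; exact ⟨hv1E, by omega⟩)
      have hMx : M < (x : ℕ) ∧ M ∈ E := by
        have := Finset.max'_mem _ hne
        simp only [Finset.mem_filter] at this
        exact ⟨this.2, this.1⟩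
      by_contra hcon
      have hvM : v - 1 < M := by omega
      -- minimal end strictly between v-1 and x
      have hTne : (E.filter (fun t => v - 1 < t ∧ t < (x : ℕ))).Nonempty :=
        ⟨M, by simp only [Finset.mem_filter]; exact ⟨hMx.2, hvM, hMx.1⟩⟩
      set e' := (E.filter (fun t => v - 1 < t ∧ t < (x : ℕ))).min' hTne with he'
      have he'm := Finset.min'_mem _ hTne
      simp only [Finset.mem_filter] at he'm
      obtain ⟨he'E, he'1, he'x⟩ := he'm
      rw [mem_EndSet] at he'E
      obtain ⟨he'n, he'e⟩ := he'E
      have he'E' : e' ∈ E := mem_EndSet.mpr ⟨he'n, he'e⟩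
      -- psN E e' = v
      have hpse' : psN E e' = v := by
        have hne2 : (E.filter (· < e')).Nonempty :=
          ⟨v - 1, by simp only [Finset.mem_filter]; exact ⟨hv1E, by omega⟩⟩
        rw [psN, dif_pos hne2]
        have hle : (E.filter (· < e')).max' hne2 ≤ v - 1 := by
          apply Finset.max'_le
          intro t ht
          simp only [Finset.mem_filter] at ht
          by_contra hgt
          have : e' ≤ t := Finset.min'_le _ _ (by
            simp only [Finset.mem_filter]
            exact ⟨ht.1, by omega, by omega⟩)
          omega
        have hge : v - 1 ≤ (E.filter (· < e')).max' hne2 :=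
          Finset.le_max' _ _ (by simp only [Finset.mem_filter]; exact ⟨hv1E, by omega⟩)
        omega
      have hrec : (π ⟨e', he'n⟩ : ℕ) = psN E e' := ih ⟨e', he'n⟩ (by simp; omega) he'e
      have : π ⟨e', he'n⟩ = π x := Fin.ext (by rw [hrec, hpse'])
      have := π.injective this
      have : e' = (x : ℕ) := congrArg Fin.val this
      omega
noncomputable def funF {n : ℕ} (E : Finset ℕ) (hE : E ∈ Aset n) : Fin n → Fin n :=
  fun x => if hx : (x : ℕ) ∈ E then ⟨psN E x, lt_of_le_of_lt (psN_le E x) x.isLt⟩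
    else ⟨(x : ℕ) + 1, by
      rcases mem_Aset.mp hE with ⟨-, hm, -, -⟩
      have h1 : (x : ℕ) < n := x.isLt
      have h2 : (x : ℕ) ≠ n - 1 := fun h => hx (h ▸ hm)
      omega⟩

lemma funF_lt {n : ℕ} (E : Finset ℕ) (hE : E ∈ Aset n) {x : Fin n} (hx : (x : ℕ) ∈ E) :
    (funF E hE x : ℕ) < (x : ℕ) := by
  rcases mem_Aset.mp hE with ⟨-, -, h0, hnc⟩
  rw [funF, dif_pos hx]
  exact psN_lt h0 hnc hx

lemma funF_succ {n : ℕ} (E : Finset ℕ) (hE : E ∈ Aset n) {x : Fin n} (hx : (x : ℕ) ∉ E) :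
    (funF E hE x : ℕ) = (x : ℕ) + 1 := by
  rw [funF, dif_neg hx]

lemma funF_inj {n : ℕ} (E : Finset ℕ) (hE : E ∈ Aset n) : Function.Injective (funF E hE) := by
  rcases mem_Aset.mp hE with ⟨-, -, h0, hnc⟩
  intro a b hab
  have hab' : (funF E hE a : ℕ) = (funF E hE b : ℕ) := congrArg Fin.val hab
  by_cases ha : (a : ℕ) ∈ E <;> by_cases hb : (b : ℕ) ∈ E
  · -- both ends: psN equal forces equal
    simp only [funF, dif_pos ha, dif_pos hb] at hab'
    apply Fin.ext
    by_contra hne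
    -- wlog a < b
    have key : ∀ u w : ℕ, u ∈ E → w ∈ E → u < w → psN E u ≠ psN E w := by
      intro u w hu hw huw
      have h1 : psN E u ≤ u := psN_le E u
      have h2 : u + 1 ≤ psN E w := by
        rw [psN]
        have hne2 : (E.filter (· < w)).Nonempty := ⟨u, by simp only [Finset.mem_filter]; exact ⟨hu, huw⟩⟩
        rw [dif_pos hne2]
        have := Finset.le_max' (E.filter (· < w)) u (by simp only [Finset.mem_filter]; exact ⟨hu, huw⟩)
        omega
      omega
    rcases Nat.lt_or_ge (a : ℕ) (b : ℕ) with h | h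
    · exact key _ _ ha hb h hab'
    · have : (b : ℕ) < (a : ℕ) := by
        rcases Nat.lt_or_ge (b : ℕ) (a : ℕ) with h' | h'
        · exact h'
        · exact absurd (congrArg Fin.val (Fin.ext (by omega) : a = b)) hne
      exact key _ _ hb ha this hab'.symm
  · -- a end, b not
    exfalso
    rw [show (funF E hE b : ℕ) = (b : ℕ) + 1 from funF_succ E hE hb] at hab'
    simp only [funF, dif_pos ha] at hab'
    -- psN E a = b + 1 ≥ 1, so max' = b ∈ E
    rw [psN] at hab'
    by_cases h : (E.filter (· < (a : ℕ))).Nonempty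
    · rw [dif_pos h] at hab'
      have hm := Finset.max'_mem _ h
      simp only [Finset.mem_filter] at hm
      have : (b : ℕ) ∈ E := by
        have : (E.filter (· < (a : ℕ))).max' h = (b : ℕ) := by omega
        exact this ▸ hm.1
      exact hb this
    · rw [dif_neg h] at hab'
      omega
  · -- b end, a not
    exfalso
    rw [show (funF E hE a : ℕ) = (a : ℕ) + 1 from funF_succ E hE ha] at hab'
    simp only [funF, dif_pos hb] at hab'
    rw [psN] at hab'
    by_cases h : (E.filter (· < (b : ℕ))).Nonempty
    · rw [dif_pos h] at hab'
      have hm := Finset.max'_mem _ h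
      simp only [Finset.mem_filter] at hm
      have : (a : ℕ) ∈ E := by
        have : (E.filter (· < (b : ℕ))).max' h = (a : ℕ) := by omega
        exact this ▸ hm.1
      exact ha this
    · rw [dif_neg h] at hab'
      omega
  · apply Fin.ext
    rw [funF_succ E hE ha, funF_succ E hE hb] at hab'
    omega

noncomputable def permF {n : ℕ} (E : Finset ℕ) (hE : E ∈ Aset n) : Equiv.Perm (Fin n) :=
  Equiv.ofBijective (funF E hE) (Finite.injective_iff_bijective.mp (funF_inj E hE))

lemma permF_apply {n : ℕ} (E : Finset ℕ) (hE : E ∈ Aset n) (x : Fin n) :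
    permF E hE x = funF E hE x := rfl

lemma permF_good {n : ℕ} (E : Finset ℕ) (hE : E ∈ Aset n) :
    isDerangement (permF E hE) ∧ GoodP (permF E hE) := by
  constructor
  · intro x
    rw [permF_apply]
    by_cases hx : (x : ℕ) ∈ E
    · intro h
      have := funF_lt E hE hx
      rw [h] at this
      omega
    · intro h
      have := funF_succ E hE hx
      rw [h] at this
      omega
  · intro x
    rw [permF_apply]
    by_cases hx : (x : ℕ) ∈ E
    · exact Or.inr (le_of_lt (funF_lt E hE hx))
    · exact Or.inl (funF_succ E hE hx)

lemma EndSet_permF {n : ℕ} (E : Finset ℕ) (hE : E ∈ Aset n) :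
    EndSet (permF E hE) = E := by
  ext v
  rw [mem_EndSet]
  constructor
  · rintro ⟨hv, h⟩
    rw [permF_apply] at h
    by_cases hx : v ∈ E
    · exact hx
    · exfalso
      have := funF_succ E hE (x := ⟨v, hv⟩) hx
      rw [Fin.lt_def, this] at h
      omega
  · intro hv
    have hvn : v < n := (mem_Aset.mp hE).1 v hv
    refine ⟨hvn, ?_⟩
    rw [permF_apply, Fin.lt_def]
    exact funF_lt E hE hv

lemma EndSet_mem_Aset {n : ℕ} (hn : 2 ≤ n) (π : Equiv.Perm (Fin n))
    (hd : isDerangement π) (hg : GoodP π) : EndSet π ∈ Aset n := by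
  have hend : ∀ x : Fin n, ¬ (π x < x) → (π x : ℕ) = (x : ℕ) + 1 := by
    intro x hx
    rcases hg x with h | h
    · exact h
    · rcases lt_or_eq_of_le h with h' | h'
      · exact absurd h' hx
      · exact absurd h' (hd x)
  rw [mem_Aset]
  refine ⟨?_, ?_, ?_, ?_⟩
  · intro e he
    rw [mem_EndSet] at he
    exact he.1
  · rw [mem_EndSet]
    refine ⟨by omega, ?_⟩
    set x : Fin n := ⟨n-1, by omega⟩
    by_contra h
    have := hend x h
    have := (π x).isLt
    have hxv : (x : ℕ) = n - 1 := rfl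
    omega
  · rw [mem_EndSet]
    rintro ⟨h0, hlt⟩
    rw [Fin.lt_def] at hlt
    have : ((⟨0, h0⟩ : Fin n) : ℕ) = 0 := rfl
    omega
  · intro e he
    rw [mem_EndSet] at he ⊢
    obtain ⟨hen, hee⟩ := he
    rintro ⟨he1n, he1⟩
    -- e+1 is an end; struct says π(e+1) = psN(EndSet π)(e+1), whose value is e+1
    have hs := struct π hd hg n ⟨e+1, he1n⟩ he1n he1
    have hpse : psN (EndSet π) (e + 1) = e + 1 := by
      rw [psN]
      have hne : ((EndSet π).filter (· < e + 1)).Nonempty :=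
        ⟨e, by simp only [Finset.mem_filter]; exact ⟨mem_EndSet.mpr ⟨hen, hee⟩, by omega⟩⟩
      rw [dif_pos hne]
      have h1 : ((EndSet π).filter (· < e + 1)).max' hne ≤ e := by
        have := Finset.max'_mem _ hne
        simp only [Finset.mem_filter] at this
        omega
      have h2 : e ≤ ((EndSet π).filter (· < e + 1)).max' hne :=
        Finset.le_max' _ _ (by simp only [Finset.mem_filter]; exact ⟨mem_EndSet.mpr ⟨hen, hee⟩, by omega⟩)
      omega
    rw [hpse] at hs
    exact hd _ (Fin.ext hs)

lemma card_perm_eq_Aset (n : ℕ) (hn : 2 ≤ n) :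
    (Finset.univ.filter (fun π : Equiv.Perm (Fin n) => isDerangement π ∧ GoodP π)).card
      = (Aset n).card := by
  refine Finset.card_bij' (fun π _ => EndSet π) (fun E hE => permF E hE) ?_ ?_ ?_ ?_
  · intro π hπ
    simp only [Finset.mem_filter, Finset.mem_univ, true_and] at hπ
    exact EndSet_mem_Aset hn π hπ.1 hπ.2
  · intro E hE
    simp only [Finset.mem_filter, Finset.mem_univ, true_and]
    exact permF_good E hE
  · intro π hπ
    simp only [Finset.mem_filter, Finset.mem_univ, true_and] at hπ
    obtain ⟨hd, hg⟩ := hπ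
    apply Equiv.ext
    intro x
    rw [permF_apply]
    apply Fin.ext
    by_cases hx : (x : ℕ) ∈ EndSet π
    · obtain ⟨hv, hlt⟩ := mem_EndSet.mp hx
      have hxx : (⟨(x : ℕ), hv⟩ : Fin n) = x := Fin.ext rfl
      rw [hxx] at hlt
      have hs := struct π hd hg n x x.isLt hlt
      rw [show (funF (EndSet π) (EndSet_mem_Aset hn π hd hg) x : ℕ) = psN (EndSet π) (x : ℕ)
        from by rw [funF, dif_pos hx]]
      exact hs.symm
    · rw [funF_succ _ _ hx]
      have hnotlt : ¬ (π x < x) := fun h => hx (mem_EndSet.mpr ⟨x.isLt, by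
        have hxx : (⟨(x : ℕ), x.isLt⟩ : Fin n) = x := Fin.ext rfl
        rw [hxx]
        exact h⟩)
      rcases hg x with h | h
      · exact h.symm
      · rcases lt_or_eq_of_le h with h' | h'
        · exact absurd h' hnotlt
        · exact absurd h' (hd x)
  · intro E hE
    exact EndSet_permF E hE

/-- With the indexing f_0 = f_1 = 1, the m-th Fibonacci number is Nat.fib (m+1). -/
theorem stmt_1 (n : ℕ) (hn : 2 ≤ n) :
    (Finset.univ.filter
        (fun π : Equiv.Perm (Fin n) => isDerangement π ∧ ¬ contains13_2 (flat π))).card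
      = Nat.fib (n - 1) := by
  have hfe : (Finset.univ.filter
        (fun π : Equiv.Perm (Fin n) => isDerangement π ∧ ¬ contains13_2 (flat π)))
      = (Finset.univ.filter (fun π : Equiv.Perm (Fin n) => isDerangement π ∧ GoodP π)) := by
    apply Finset.filter_congr
    intro π _
    constructor
    · rintro ⟨hd, hnc⟩
      refine ⟨hd, ?_⟩
      by_contra hb
      exact hnc (contains_of_not_good π hb)
    · rintro ⟨hd, hg⟩
      exact ⟨hd, avoid_of_good π hg⟩
  rw [hfe, card_perm_eq_Aset n hn, card_Aset n hn]
end

section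
/- Let π be a derangement of [n] with n ≥ 3 whose flattened form avoids the vincular pattern 13-2. Then the flattened form of π is the identity word 1 2 3 ⋯ n. -/
open Finset Polynomial

open scoped Classical

lemma flatAux_spec {n : ℕ} (π : Equiv.Perm (Fin n)) :
    ∀ (fuel : ℕ) (visited : Finset (Fin n)) (cur : Fin n), cur ∉ visited →
      fuel = n - visited.card →
      (flatAux π fuel cur visited).Nodup ∧
        ∀ x, x ∈ flatAux π fuel cur visited ↔ x ∉ visited := by
  intro fuel
  induction fuel with
  | zero =>
    intro visited cur hc hf
    have hle : visited.card ≤ n := by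
      simpa using Finset.card_le_card (Finset.subset_univ visited)
    have : visited.card = n := by omega
    have : visited = Finset.univ := Finset.eq_univ_of_card _ (by simpa using this)
    exact absurd (this ▸ Finset.mem_univ cur) hc
  | succ fuel ih =>
    intro visited cur hc hf
    have hlt : visited.card < n := by
      have hle : visited.card ≤ n := by
        simpa using Finset.card_le_card (Finset.subset_univ visited)
      rcases lt_or_eq_of_le hle with h | h
      · exact h
      · have : visited = Finset.univ := Finset.eq_univ_of_card _ (by simp [h])
        exact absurd (this ▸ Finset.mem_univ cur) hc
    have hcardV' : (insert cur visited).card = visited.card + 1 :=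
      Finset.card_insert_of_notMem hc
    have hfuel' : fuel = n - (insert cur visited).card := by omega
    have key : ∀ next : Fin n, next ∉ insert cur visited →
        (cur :: flatAux π fuel next (insert cur visited)).Nodup ∧
        ∀ x, x ∈ cur :: flatAux π fuel next (insert cur visited) ↔ x ∉ visited := by
      intro next hnext
      obtain ⟨hnd, hmem⟩ := ih (insert cur visited) next hnext hfuel'
      constructor
      · exact List.nodup_cons.mpr ⟨fun h => (hmem cur).mp h (Finset.mem_insert_self _ _), hnd⟩
      · intro x
        simp only [List.mem_cons, hmem, Finset.mem_insert, not_or]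
        constructor
        · rintro (rfl | ⟨_, h⟩)
          · exact hc
          · exact h
        · intro hx
          by_cases hxc : x = cur
          · exact Or.inl hxc
          · exact Or.inr ⟨hxc, hx⟩
    rw [flatAux]
    split_ifs with h1 h2
    · exact key _ (Finset.mem_sdiff.mp (Finset.min'_mem _ h2)).2
    · -- complement empty: insert cur visited = univ
      have huniv : insert cur visited = Finset.univ := by
        by_contra hne
        exact h2 (Finset.sdiff_nonempty.mpr fun hs => hne (Finset.univ_subset_iff.mp hs))
      constructor
      · simp
      · intro x
        simp only [List.mem_cons, List.not_mem_nil, or_false]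
        constructor
        · rintro rfl; exact hc
        · intro hx
          have : x ∈ insert cur visited := huniv ▸ Finset.mem_univ x
          rcases Finset.mem_insert.mp this with h | h
          · exact h
          · exact absurd h hx
    · exact key _ h1

theorem stmt_2 (n : ℕ) (hn : 3 ≤ n) (π : Equiv.Perm (Fin n))
    (hd : isDerangement π) (hav : ¬ contains13_2 (flat π)) :
    flat π = List.range' 1 n := by
  have h0 : 0 < n := by omega
  set L := flatAux π n ⟨0, h0⟩ (∅ : Finset (Fin n)) with hL
  obtain ⟨hnd, hmem⟩ := flatAux_spec π n ∅ ⟨0, h0⟩ (by simp) (by simp)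
  rw [← hL] at hnd hmem
  have hmem' : ∀ x : Fin n, x ∈ L := fun x => (hmem x).mpr (by simp)
  have hLlen : L.length = n := by
    have h1 : L.toFinset = Finset.univ :=
      Finset.eq_univ_iff_forall.mpr (by simpa using hmem')
    have h2 := List.toFinset_card_of_nodup hnd
    rw [h1] at h2
    simpa using h2.symm
  have hw : flat π = L.map (fun x : Fin n => (x : ℕ) + 1) := by
    rw [flat, dif_pos h0, hL]
    simp [List.map_eq_flatMap, List.flatMap_assoc]
  have c1 : ∀ {i : ℕ}, i < n → i < L.length := fun {i} h => by rw [hLlen]; exact h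
  have c2 : ∀ {i : ℕ}, i < L.length → i < n := fun {i} h => by rw [← hLlen]; exact h
  set w := flat π with hwdef
  have hwlen : w.length = n := by rw [hw]; simpa using hLlen
  have hgetD : ∀ i (hi : i < n),
      w.getD i 0 = ((L.get ⟨i, c1 hi⟩ : Fin n) : ℕ) + 1 := by
    intro i hi
    have hiL : i < L.length := c1 hi
    rw [hw, List.getD_eq_getElem _ _ (by simpa using hiL), List.getElem_map]
    simp [List.get_eq_getElem]
  have hbound : ∀ i, i < n → 1 ≤ w.getD i 0 ∧ w.getD i 0 ≤ n := by
    intro i hi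
    rw [hgetD i hi]
    have := (L.get ⟨i, c1 hi⟩).isLt
    omega
  have hinj : ∀ i j (hi : i < n) (hj : j < n), w.getD i 0 = w.getD j 0 → i = j := by
    intro i j hi hj h
    rw [hgetD i hi, hgetD j hj] at h
    have h2 : L.get ⟨i, c1 hi⟩ = L.get ⟨j, c1 hj⟩ := by
      apply Fin.ext; omega
    have := (List.nodup_iff_injective_get.mp hnd) h2
    simpa using this
  have hsurj : ∀ v, 1 ≤ v → v ≤ n → ∃ j, j < n ∧ w.getD j 0 = v := by
    intro v h1 h2
    obtain ⟨j, hj⟩ := List.get_of_mem (hmem' ⟨v - 1, by omega⟩)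
    have hjn : (j : ℕ) < n := c2 j.isLt
    refine ⟨j, hjn, ?_⟩
    rw [hgetD j hjn]
    have heq : L.get ⟨(j : ℕ), c1 hjn⟩ = (⟨v - 1, by omega⟩ : Fin n) := by
      rw [← hj]
    rw [heq]
    simp
    omega
  have hhead : w.getD 0 0 = 1 := by
    rw [hgetD 0 h0]
    have hL1 : L = flatAux π ((n - 1) + 1) ⟨0, h0⟩ ∅ := by rw [hL]; congr 1; omega
    rw [flatAux] at hL1
    have hget0 : L.get ⟨0, c1 h0⟩ = (⟨0, h0⟩ : Fin n) := by
      rw [List.get_eq_getElem]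
      simp only [hL1]
      rfl
    rw [hget0]
  have key : ∀ k, k < n → w.getD k 0 = k + 1 := by
    intro k
    induction k using Nat.strong_induction_on with
    | _ k ih =>
      intro hk
      rcases Nat.eq_zero_or_pos k with rfl | hkpos
      · exact hhead
      by_contra hne
      have hbig : k + 2 ≤ w.getD k 0 := by
        by_contra hle
        push_neg at hle
        have h1 := hbound k hk
        have hm : w.getD k 0 - 1 < k := by omega
        have h2 := ih _ hm (by omega)
        have h3 : w.getD (w.getD k 0 - 1) 0 = w.getD k 0 := by omega
        have := hinj _ _ (by omega) hk h3
        omega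
      obtain ⟨j, hjn, hjv⟩ := hsurj (k + 1) (by omega) (by omega)
      have hjk : k < j := by
        rcases lt_trichotomy j k with h | h | h
        · have := ih j h (by omega)
          omega
        · subst h; omega
        · exact h
      apply hav
      refine ⟨⟨k - 1, by omega⟩, ⟨j, by omega⟩, by simp; omega, ?_, ?_⟩
      · have := ih (k - 1) (by omega) (by omega)
        simp only []
        omega
      · have h1 := ih (k - 1) (by omega) (by omega)
        have hk1 : k - 1 + 1 = k := by omega
        simp only [hk1]
        omega
  apply List.ext_getElem
  · rw [hwlen, List.length_range']
  · intro i h1 h2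
    have hi : i < n := by rw [hwlen] at h1; exact h1
    rw [List.getElem_range']
    have hkey := key i hi
    rw [List.getD_eq_getElem _ _ h1] at hkey
    omega
end

section
/- For every m ≥ 0, the identity 2^m = (2m/(m+1)) · Σ_{j=0}^{m-1} (-1)^j binom(m-1, j) binom(4m-2j+1, m-1) + (1/(m+1)) · Σ_{j=0}^{m} (-1)^j binom(m, j) binom(4m-2j+2, m) holds. -/
open Polynomial Finset

lemma key (n k : ℕ) :
    ∑ j ∈ Finset.range (n+1), (-1:ℚ)^j * (n.choose j) * ((2*n+k-2*j).choose n) = 2^n := by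
  have hpoly : ∑ j ∈ Finset.range (n+1),
      C ((-1:ℚ)^j * (n.choose j)) * (X+1)^(2*n+k-2*j)
      = X^n * ((X+2)^n * (X+1)^k) := by
    have h1 : ((X+1:ℚ[X])^2 + (-1))^n
        = ∑ j ∈ Finset.range (n+1), (-1:ℚ[X])^j * ((X+1)^2)^(n-j) * ((n.choose j : ℚ[X])) := by
      rw [add_comm, add_pow]
    have h2 : ((X+1:ℚ[X])^2 + (-1))^n = X^n * (X+2)^n := by
      rw [← mul_pow]; congr 1; ring
    calc ∑ j ∈ Finset.range (n+1), C ((-1:ℚ)^j * (n.choose j)) * (X+1)^(2*n+k-2*j)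
        = ∑ j ∈ Finset.range (n+1),
            ((-1:ℚ[X])^j * ((X+1)^2)^(n-j) * ((n.choose j : ℚ[X]))) * (X+1)^k := by
          refine Finset.sum_congr rfl fun j hj => ?_
          have hj' : j ≤ n := Nat.lt_succ_iff.mp (Finset.mem_range.mp hj)
          have he : 2*n+k-2*j = 2*(n-j) + k := by omega
          rw [he, ← pow_mul, pow_add]
          simp only [map_mul, map_pow, map_neg, map_one, Polynomial.C_eq_natCast]
          ring
      _ = ((X+1:ℚ[X])^2 + (-1))^n * (X+1)^k := by rw [h1, Finset.sum_mul]
      _ = X^n * ((X+2)^n * (X+1)^k) := by rw [h2]; ring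
  have h := congrArg (fun p => Polynomial.coeff p n) hpoly
  simp only [Polynomial.finset_sum_coeff, Polynomial.coeff_C_mul] at h
  have hx : (X^n * ((X+2:ℚ[X])^n * (X+1)^k)).coeff n = ((X+2:ℚ[X])^n * (X+1)^k).coeff 0 := by
    have := Polynomial.coeff_X_pow_mul ((X+2:ℚ[X])^n * (X+1)^k) n 0
    rwa [zero_add] at this
  rw [hx, Polynomial.coeff_zero_eq_eval_zero] at h
  simp only [Polynomial.coeff_X_add_one_pow] at h
  simpa [mul_assoc] using h

theorem stmt_4 (m : ℕ) :
    (2 : ℚ) ^ m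
      = (2 * m / (m + 1)) *
          ∑ j ∈ Finset.range m,
            (-1 : ℚ) ^ j * ((m - 1).choose j) * ((4 * m - 2 * j + 1).choose (m - 1))
        + (1 / (m + 1)) *
          ∑ j ∈ Finset.range (m + 1),
            (-1 : ℚ) ^ j * (m.choose j) * ((4 * m - 2 * j + 2).choose m) := by
  rcases Nat.eq_zero_or_pos m with rfl | hm
  · norm_num
  have h2 : ∑ j ∈ Finset.range (m+1),
      (-1 : ℚ) ^ j * (m.choose j) * ((4 * m - 2 * j + 2).choose m) = 2^m := by
    rw [← key m (2*m+2)]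
    refine Finset.sum_congr rfl fun j hj => ?_
    have hj' : j ≤ m := Nat.lt_succ_iff.mp (Finset.mem_range.mp hj)
    rw [show 2*m+(2*m+2)-2*j = 4*m-2*j+2 by omega]
  have h1 : ∑ j ∈ Finset.range m,
      (-1 : ℚ) ^ j * ((m - 1).choose j) * ((4 * m - 2 * j + 1).choose (m - 1)) = 2^(m-1) := by
    rw [show Finset.range m = Finset.range ((m-1)+1) by rw [Nat.sub_add_cancel hm],
      ← key (m-1) (2*m+3)]
    refine Finset.sum_congr rfl fun j hj => ?_
    have hj' : j ≤ m - 1 := Nat.lt_succ_iff.mp (Finset.mem_range.mp hj)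
    rw [show 2*(m-1)+(2*m+3)-2*j = 4*m-2*j+1 by omega]
  rw [h1, h2]
  have hpow : (2:ℚ)^m = 2 * 2^(m-1) := by
    rw [← pow_succ']; congr 1; omega
  have hne : (m:ℚ) + 1 ≠ 0 := by positivity
  field_simp
  rw [hpow]; ring
end

section
/- For every m ≥ 1, the number of perfect matchings of [2m] (permutations of [2m] all of whose cycles have length exactly two) whose flattened form avoids the vincular pattern 31-2 equals 2^{m-1}. -/
open Finset Polynomial

open scoped Classical

/-- A word contains the vincular pattern 31-2: positions i < i+1 < j with w_{i+1} < w_j < w_i. -/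
def contains31_2 (w : List ℕ) : Prop :=
  ∃ i j : Fin w.length, (i : ℕ) + 1 < (j : ℕ) ∧
    w.getD ((i : ℕ) + 1) 0 < w.getD (j : ℕ) 0 ∧ w.getD (j : ℕ) 0 < w.getD (i : ℕ) 0

namespace FMAux

variable {m : ℕ} {b : ℕ → Bool}

def lp (b : ℕ → Bool) (k : ℕ) : ℕ := if b k then 2*k - 1 else 2*k
def rp (b : ℕ → Bool) (k : ℕ) : ℕ := if b (k+1) then 2*k + 2 else 2*k + 1

def Hb (m : ℕ) (b : ℕ → Bool) : Prop := b 0 = false ∧ ∀ j, m ≤ j → b j = false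

lemma hb_one (hb : Hb m b) {k : ℕ} (h : b k = true) : 1 ≤ k := by
  rcases Nat.eq_zero_or_pos k with rfl | h1
  · rw [hb.1] at h; simp at h
  · exact h1

lemma hb_lt (hb : Hb m b) {k : ℕ} (h : b k = true) : k < m := by
  by_contra hc
  rw [hb.2 k (by omega)] at h; simp at h

lemma lp_le (k : ℕ) : lp b k ≤ 2*k := by unfold lp; split <;> omega

lemma lp_lt {k : ℕ} (hk : k < m) : lp b k < 2*m := by unfold lp; split <;> omega

lemma rp_ge (k : ℕ) : 2*k + 1 ≤ rp b k := by unfold rp; split <;> omega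

lemma rp_le (k : ℕ) : rp b k ≤ 2*k + 2 := by unfold rp; split <;> omega

lemma rp_lt (hb : Hb m b) {k : ℕ} (hk : k < m) : rp b k < 2*m := by
  unfold rp
  rcases h : b (k+1) with _ | _
  · simp; omega
  · have := hb_lt hb h; simp; omega

def pf (b : ℕ → Bool) (x : ℕ) : ℕ :=
  if x % 2 = 0 then
    if b (x/2) then (if b (x/2 - 1) then x - 3 else x - 2)
    else (if b (x/2 + 1) then x + 2 else x + 1)
  else
    if b (x/2 + 1) then (if b (x/2 + 2) then x + 3 else x + 2)
    else (if b (x/2) then x - 2 else x - 1)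

lemma pf_lp (hb : Hb m b) (k : ℕ) : pf b (lp b k) = rp b k := by
  rcases hbk : b k with _ | _
  · have e1 : lp b k = 2*k := by simp [lp, hbk]
    rw [e1]
    unfold pf
    rw [if_pos (by omega), show 2*k/2 = k by omega, hbk]
    simp only [Bool.false_eq_true, if_false]
    unfold rp
    rfl
  · have k1 : 1 ≤ k := hb_one hb hbk
    have e1 : lp b k = 2*k - 1 := by simp [lp, hbk]
    rw [e1]
    unfold pf
    rw [if_neg (by omega), show (2*k-1)/2 + 1 = k by omega, hbk]
    simp only [if_true]
    rw [show (2*k-1)/2 + 2 = k + 1 by omega]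
    unfold rp
    rcases h2 : b (k+1) <;> simp <;> omega

lemma pf_rp (hb : Hb m b) (k : ℕ) : pf b (rp b k) = lp b k := by
  rcases hbk : b (k+1) with _ | _
  · have e1 : rp b k = 2*k + 1 := by simp [rp, hbk]
    rw [e1]
    unfold pf
    rw [if_neg (by omega), show (2*k+1)/2 + 1 = k + 1 by omega, hbk]
    simp only [Bool.false_eq_true, if_false]
    rw [show (2*k+1)/2 = k by omega]
    unfold lp
    rcases h2 : b k <;> simp <;> omega
  · have e1 : rp b k = 2*k + 2 := by simp [rp, hbk]
    rw [e1]
    unfold pf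
    rw [if_pos (by omega), show (2*k+2)/2 = k + 1 by omega, hbk]
    simp only [if_true]
    rw [show k + 1 - 1 = k by omega]
    unfold lp
    rcases h2 : b k <;> simp <;> omega

lemma cover (hb : Hb m b) (x : ℕ) (hx : x < 2*m) :
    ∃ k, k < m ∧ (x = lp b k ∨ x = rp b k) := by
  by_cases hpar : x % 2 = 0
  · set i := x / 2 with hi
    have hxe : x = 2*i := by omega
    rcases hbi : b i with _ | _
    · exact ⟨i, by omega, Or.inl (by simp [lp, hbi]; omega)⟩
    · have i1 : 1 ≤ i := hb_one hb hbi
      refine ⟨i-1, by omega, Or.inr ?_⟩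
      simp [rp, show i-1+1 = i by omega, hbi]; omega
  · set i := x / 2 with hi
    have hxe : x = 2*i+1 := by omega
    rcases hbi : b (i+1) with _ | _
    · exact ⟨i, by omega, Or.inr (by simp [rp, hbi]; omega)⟩
    · have := hb_lt hb hbi
      refine ⟨i+1, by omega, Or.inl ?_⟩
      simp [lp, hbi]; omega

lemma lp_ne_rp (k : ℕ) : lp b k ≠ rp b k := by
  have := lp_le (b := b) k; have := rp_ge (b := b) k; omega

lemma pf_lt (hb : Hb m b) {x : ℕ} (hx : x < 2*m) : pf b x < 2*m := by
  obtain ⟨k, hk, h | h⟩ := cover hb x hx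
  · rw [h, pf_lp hb]; exact rp_lt hb hk
  · rw [h, pf_rp hb]; exact lp_lt hk

lemma pf_pf (hb : Hb m b) {x : ℕ} (hx : x < 2*m) : pf b (pf b x) = x := by
  obtain ⟨k, hk, h | h⟩ := cover hb x hx
  · rw [h, pf_lp hb, pf_rp hb]
  · rw [h, pf_rp hb, pf_lp hb]

lemma pf_ne (hb : Hb m b) {x : ℕ} (hx : x < 2*m) : pf b x ≠ x := by
  obtain ⟨k, hk, h | h⟩ := cover hb x hx
  · rw [h, pf_lp hb]; exact (lp_ne_rp k).symm
  · rw [h, pf_rp hb]; exact lp_ne_rp k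

/-- The explicit involution attached to a bit sequence. -/
def σp (b : ℕ → Bool) (hb : Hb m b) : Equiv.Perm (Fin (2*m)) :=
  Function.Involutive.toPerm (fun x => ⟨pf b x.1, pf_lt hb x.2⟩)
    (fun x => Fin.ext (pf_pf hb x.2))

lemma σp_apply (hb : Hb m b) (x : Fin (2*m)) : ((σp b hb) x : ℕ) = pf b (x:ℕ) := rfl

lemma σp_fpfinv (hb : Hb m b) : ∀ i, σp b hb i ≠ i ∧ σp b hb (σp b hb i) = i := by
  intro i
  constructor
  · intro h
    exact pf_ne hb i.2 (congrArg Fin.val h)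
  · exact Fin.ext (pf_pf hb i.2)

lemma σp_match (hb : Hb m b) {k : ℕ} (x : Fin (2*m)) (hx : (x:ℕ) = lp b k) :
    ((σp b hb) x : ℕ) = rp b k := by
  rw [σp_apply, hx, pf_lp hb]

/-- The visited set after `k` pairs. -/
def Vf (m : ℕ) (b : ℕ → Bool) (k : ℕ) : Finset (Fin (2*m)) :=
  Finset.univ.filter (fun x => (x:ℕ) < lp b k ∨ (b k = true ∧ (x:ℕ) = 2*k))

lemma mem_Vf {k : ℕ} {x : Fin (2*m)} :
    x ∈ Vf m b k ↔ ((x:ℕ) < lp b k ∨ (b k = true ∧ (x:ℕ) = 2*k)) := by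
  simp [Vf]

lemma Vf_zero (hb : Hb m b) : Vf m b 0 = ∅ := by
  ext x; simp [mem_Vf, lp, hb.1]

lemma Vf_top (hb : Hb m b) : Vf m b m = univ := by
  ext x
  have hbm : b m = false := hb.2 m le_rfl
  simp [mem_Vf, lp, hbm, x.2]

lemma lp_not_mem_Vf (hb : Hb m b) {k : ℕ} {x : Fin (2*m)} (hx : (x:ℕ) = lp b k) :
    x ∉ Vf m b k := by
  rw [mem_Vf]
  rcases h1 : b k with _ | _ <;>
    [skip; (have := hb_one hb h1)] <;> simp [lp, h1] at hx ⊢ <;> omega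

lemma compl_nonempty (hb : Hb m b) {k : ℕ} (hk : k < m) : (univ \ Vf m b k).Nonempty := by
  refine ⟨⟨lp b k, lp_lt hk⟩, ?_⟩
  rw [mem_sdiff]
  exact ⟨mem_univ _, lp_not_mem_Vf hb rfl⟩

lemma min'_compl (hb : Hb m b) {k : ℕ} (hk : k < m) (h : (univ \ Vf m b k).Nonempty) :
    (univ \ Vf m b k).min' h = ⟨lp b k, lp_lt hk⟩ := by
  apply le_antisymm
  · apply min'_le
    rw [mem_sdiff]
    exact ⟨mem_univ _, lp_not_mem_Vf hb rfl⟩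
  · apply le_min'
    intro y hy
    rw [mem_sdiff, mem_Vf] at hy
    rw [Fin.le_def]
    push_neg at hy
    exact hy.2.1

lemma mem_insert_lp (hb : Hb m b) {k : ℕ} (hk : k < m) (x : Fin (2*m)) :
    x ∈ insert (⟨lp b k, lp_lt hk⟩ : Fin (2*m)) (Vf m b k) ↔ (x:ℕ) ≤ 2*k := by
  rw [Finset.mem_insert, mem_Vf, Fin.ext_iff]
  rcases h1 : b k with _ | _ <;> simp [lp, h1] <;>
    [skip; (have := hb_one hb h1)] <;> omega

lemma insert_rp_lp (hb : Hb m b) {k : ℕ} (hk : k < m) (hrp : rp b k < 2*m) :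
    insert (⟨rp b k, hrp⟩ : Fin (2*m)) (insert (⟨lp b k, lp_lt hk⟩ : Fin (2*m)) (Vf m b k))
      = Vf m b (k+1) := by
  ext x
  rw [Finset.mem_insert, Fin.ext_iff, mem_insert_lp hb hk, mem_Vf]
  rcases h1 : b (k+1) with _ | _ <;> simp only [lp, rp, h1, if_true, if_false] <;>
    simp <;> omega

lemma Vf_card (hb : Hb m b) : ∀ k, k ≤ m → (Vf m b k).card = 2*k := by
  intro k
  induction k with
  | zero => intro _; rw [Vf_zero hb]; simp
  | succ k IH =>
    intro hk1
    have hk : k < m := by omega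
    rw [← insert_rp_lp hb hk (rp_lt hb hk)]
    rw [Finset.card_insert_of_notMem, Finset.card_insert_of_notMem (lp_not_mem_Vf hb rfl)]
    · rw [IH (by omega)]; omega
    · rw [mem_insert_lp hb hk]
      show ¬ rp b k ≤ 2*k
      have := rp_ge (b := b) k
      omega

section Traverse

variable {n : ℕ} {π : Equiv.Perm (Fin n)}

lemma unfold2 (hπ : ∀ i, π i ≠ i ∧ π (π i) = i) (fuel : ℕ) (V : Finset (Fin n))
    (hinv : ∀ x ∈ V, π x ∈ V) (c : Fin n) (hc : c ∉ V) :
    flatAux π (fuel+2) c V =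
      c :: π c ::
        (if h : (univ \ insert (π c) (insert c V)).Nonempty then
          flatAux π fuel ((univ \ insert (π c) (insert c V)).min' h)
            (insert (π c) (insert c V))
        else []) := by
  have hπc : π c ∉ insert c V := by
    rw [Finset.mem_insert]
    rintro (h | h)
    · exact (hπ c).1 h
    · have := hinv _ h
      rw [(hπ c).2] at this
      exact hc this
  have h2 : π (π c) ∈ insert (π c) (insert c V) := by
    rw [(hπ c).2]
    exact Finset.mem_insert_of_mem (Finset.mem_insert_self _ _)
  show flatAux π ((fuel+1)+1) c V = _
  rw [flatAux, if_neg hπc]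
  show _ :: flatAux π (fuel+1) (π c) (insert c V) = _
  rw [flatAux, if_pos h2]

lemma mem_flatAux (hπ : ∀ i, π i ≠ i ∧ π (π i) = i) :
    ∀ fuel (V : Finset (Fin n)), (∀ x ∈ V, π x ∈ V) →
      ∀ h : (univ \ V).Nonempty, ∀ x, x ∉ V → (univ \ V).card ≤ fuel →
        x ∈ flatAux π fuel ((univ \ V).min' h) V := by
  intro fuel
  induction fuel using Nat.strong_induction_on with
  | _ fuel IH =>
    intro V hinv h x hx hcard
    set c := (univ \ V).min' h with hc
    have hcV : c ∉ V := by
      have := Finset.min'_mem _ h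
      rw [mem_sdiff] at this
      exact this.2
    have hπcV : π c ∉ V := fun hmem => by
      have := hinv _ hmem
      rw [(hπ c).2] at this
      exact hcV this
    have hpair : ({c, π c} : Finset (Fin n)) ⊆ univ \ V := by
      intro y hy
      rw [Finset.mem_insert, Finset.mem_singleton] at hy
      rcases hy with rfl | rfl <;> simp [mem_sdiff, hcV, hπcV]
    have hcard2 : 2 ≤ (univ \ V).card := by
      have h1 := Finset.card_le_card hpair
      rwa [Finset.card_pair (Ne.symm (hπ c).1)] at h1
    obtain ⟨f, rfl⟩ : ∃ f, fuel = f + 2 := ⟨fuel - 2, by omega⟩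
    rw [unfold2 hπ f V hinv c hcV]
    by_cases hxc : x = c
    · simp [hxc]
    by_cases hxpc : x = π c
    · simp [hxpc]
    have hxV' : x ∉ insert (π c) (insert c V) := by
      simp only [Finset.mem_insert]
      push_neg
      exact ⟨hxpc, hxc, hx⟩
    have h' : (univ \ insert (π c) (insert c V)).Nonempty :=
      ⟨x, by simp [mem_sdiff, hxV']⟩
    rw [dif_pos h']
    have hinv' : ∀ y ∈ insert (π c) (insert c V), π y ∈ insert (π c) (insert c V) := by
      intro y hy
      simp only [Finset.mem_insert] at hy ⊢
      rcases hy with rfl | rfl | hy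
      · right; left; exact ((hπ c).2)
      · left; rfl
      · right; right; exact hinv _ hy
    have hcard' : (univ \ insert (π c) (insert c V)).card ≤ f := by
      have e1 : univ \ insert (π c) (insert c V) = ((univ \ V).erase c).erase (π c) := by
        ext y
        simp only [mem_sdiff, Finset.mem_insert, Finset.mem_erase, mem_univ, true_and]
        tauto
      rw [e1]
      have hπcmem : π c ∈ (univ \ V).erase c := by
        rw [Finset.mem_erase]
        exact ⟨(hπ c).1, by simp [mem_sdiff, hπcV]⟩
      rw [Finset.card_erase_of_mem hπcmem, Finset.card_erase_of_mem (by simp [mem_sdiff, hcV, hc.symm ▸ Finset.min'_mem _ h])]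
      omega
    have := IH f (by omega) _ hinv' h' x hxV' hcard'
    simp only [List.mem_cons]
    right; right; exact this

lemma min'_univ (h0 : 0 < n) (h : (univ : Finset (Fin n)).Nonempty) :
    (univ : Finset (Fin n)).min' h = ⟨0, h0⟩ := by
  apply le_antisymm
  · exact min'_le _ _ (mem_univ _)
  · apply le_min'
    intro y _
    rw [Fin.le_def]
    exact Nat.zero_le _

end Traverse

lemma mapval {n : ℕ} (l : List (Fin n)) :
    (List.map (fun x : ℕ => x + 1) (l.flatMap fun a => [(a:ℕ)])) =
      l.map (fun x : Fin n => (x:ℕ)+1) := by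
  induction l with
  | nil => rfl
  | cons a l IH => simp [IH]; simpa using IH

/-- The flattened word of the first `k` pairs. -/
def wordN (b : ℕ → Bool) : ℕ → List ℕ
  | 0 => []
  | k+1 => wordN b k ++ [lp b k + 1, rp b k + 1]

lemma wordN_length (k : ℕ) : (wordN b k).length = 2*k := by
  induction k with
  | zero => rfl
  | succ k IH => simp [wordN, IH]; omega

lemma wordN_getD (hb : Hb m b) : ∀ k, ∀ p, p < 2*k →
    p ≤ (wordN b k).getD p 0 ∧ (wordN b k).getD p 0 ≤ p + 2 := by
  intro k
  induction k with
  | zero => intro p hp; omega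
  | succ k IH =>
    intro p hp
    rw [wordN]
    by_cases hpk : p < 2*k
    · rw [List.getD_append _ _ _ _ (by rw [wordN_length]; omega)]
      exact IH p hpk
    · rw [List.getD_append_right _ _ _ _ (by rw [wordN_length]; omega), wordN_length]
      have : p = 2*k ∨ p = 2*k+1 := by omega
      rcases this with rfl | rfl
      · simp only [Nat.sub_self, List.getD_cons_zero]
        have h1 : b k = true → 1 ≤ k := fun h => hb_one hb h
        unfold lp
        rcases h2 : b k <;> simp [h2] at h1 ⊢ <;> omega
      · rw [show 2*k+1 - 2*k = 1 by omega]
        simp only [List.getD_cons_succ, List.getD_cons_zero]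
        have := rp_ge (b := b) k
        have := rp_le (b := b) k
        omega

variable {π : Equiv.Perm (Fin (2*m))}

/-- The remaining tail of the flattening after `k` pairs. -/
def Rtail (π : Equiv.Perm (Fin (2*m))) (b : ℕ → Bool) (k : ℕ) : List (Fin (2*m)) :=
  if h : (univ \ Vf m b k).Nonempty then
    flatAux π (2*(m-k)) ((univ \ Vf m b k).min' h) (Vf m b k)
  else []

lemma struct' (hm : 1 ≤ m) (hb : Hb m b) (hπ : ∀ i, π i ≠ i ∧ π (π i) = i) :
    ∀ k, k ≤ m →
    (∀ j, j < k → ∀ x : Fin (2*m), (x:ℕ) = lp b j → ((π x : ℕ) = rp b j)) →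
    (flat π = wordN b k ++ (Rtail π b k).map (fun x : Fin (2*m) => (x:ℕ)+1)) ∧
      (∀ x ∈ Vf m b k, π x ∈ Vf m b k) := by
  intro k
  induction k with
  | zero =>
    intro _ _
    constructor
    · have h0 : 0 < 2*m := by omega
      have hne : (univ : Finset (Fin (2*m))).Nonempty := ⟨⟨0, h0⟩, mem_univ _⟩
      have : Rtail π b 0 = flatAux π (2*m) ⟨0, h0⟩ ∅ := by
        rw [Rtail, Vf_zero hb]
        simp only [Finset.sdiff_empty]
        rw [dif_pos hne, min'_univ h0 hne, Nat.sub_zero]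
      rw [flat, dif_pos h0, this]
      simp only [wordN, List.nil_append]
      simpa using mapval (flatAux π (2 * m) ⟨0, h0⟩ ∅)
    · intro x hx
      rw [Vf_zero hb] at hx
      simp at hx
  | succ k IH =>
    intro hk1 hmatch
    have hk : k < m := by omega
    obtain ⟨hP, hInv⟩ := IH (by omega) (fun j hj => hmatch j (by omega))
    have hne := compl_nonempty hb hk
    set c : Fin (2*m) := ⟨lp b k, lp_lt hk⟩ with hcdef
    have hcV : c ∉ Vf m b k := lp_not_mem_Vf hb rfl
    have hπc : (π c : ℕ) = rp b k := hmatch k (by omega) c rfl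
    have hπcF : π c = ⟨rp b k, rp_lt hb hk⟩ := Fin.ext hπc
    have hfuel : 2*(m-k) = 2*(m-(k+1)) + 2 := by omega
    have hRk : Rtail π b k = c :: (⟨rp b k, rp_lt hb hk⟩ : Fin (2*m)) :: Rtail π b (k+1) := by
      rw [Rtail, dif_pos hne, min'_compl hb hk hne, hfuel,
        unfold2 hπ _ _ hInv c hcV, hπcF, insert_rp_lp hb hk (rp_lt hb hk)]
      rfl
    have hsub : Vf m b k ⊆ Vf m b (k+1) := by
      rw [← insert_rp_lp hb hk (rp_lt hb hk)]
      exact fun x hx => Finset.mem_insert_of_mem (Finset.mem_insert_of_mem hx)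
    constructor
    · rw [hP, hRk, wordN]
      simp [hπc]
      rfl
    · intro x hx
      rw [← insert_rp_lp hb hk (rp_lt hb hk)] at hx
      rw [Finset.mem_insert, Finset.mem_insert] at hx
      rcases hx with rfl | rfl | hx
      · -- x = ⟨rp b k⟩ = π c
        rw [← hπcF, (hπ c).2, ← insert_rp_lp hb hk (rp_lt hb hk)]
        exact Finset.mem_insert_of_mem (Finset.mem_insert_self _ _)
      · rw [hπcF]
        rw [← insert_rp_lp hb hk (rp_lt hb hk)]
        exact Finset.mem_insert_self _ _
      · exact hsub (hInv x hx)

end FMAux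

namespace FMAux

variable {m : ℕ} {b : ℕ → Bool} {π : Equiv.Perm (Fin (2*m))}

lemma flat_matched (hm : 1 ≤ m) (hb : Hb m b) (hπ : ∀ i, π i ≠ i ∧ π (π i) = i)
    (hmatch : ∀ j, j < m → ∀ x : Fin (2*m), (x:ℕ) = lp b j → ((π x : ℕ) = rp b j)) :
    flat π = wordN b m := by
  obtain ⟨hP, _⟩ := struct' hm hb hπ m le_rfl hmatch
  rw [hP]
  have hempty : Rtail π b m = [] := by
    rw [Rtail, dif_neg]
    rw [Vf_top hb, Finset.sdiff_self]
    simp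
  rw [hempty]
  simp

lemma not_contains_wordN (hb : Hb m b) (hw : flat π = wordN b m) :
    ¬ contains31_2 (flat π) := by
  rintro ⟨i, j, hij, h2, h3⟩
  have hlen : (flat π).length = 2*m := by rw [hw, wordN_length]
  have hi : (i:ℕ) < 2*m := by have := i.2; omega
  have hj : (j:ℕ) < 2*m := by have := j.2; omega
  have Bi := wordN_getD hb m (i:ℕ) hi
  have Bj := wordN_getD hb m (j:ℕ) hj
  rw [← hw] at Bi Bj
  omega

/-- The bit sequence extracted from a permutation. -/
def bits (m : ℕ) (π : Equiv.Perm (Fin (2*m))) (j : ℕ) : Bool :=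
  if h : 1 ≤ j ∧ j < m then decide (2*j - 1 < (π ⟨2*j-1, by omega⟩ : ℕ)) else false

lemma hb_bits : Hb m (bits m π) := by
  constructor
  · rw [bits, dif_neg (by omega)]
  · intro j hj; rw [bits, dif_neg (by omega)]

lemma bits_eq_true {j : ℕ} (h1 : 1 ≤ j) (h2 : j < m) {x : Fin (2*m)} (hx : (x:ℕ) = 2*j-1) :
    (bits m π j = true ↔ 2*j - 1 < (π x : ℕ)) := by
  rw [bits, dif_pos ⟨h1, h2⟩]
  have he : (⟨2*j-1, by omega⟩ : Fin (2*m)) = x := Fin.ext (by simp [hx])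
  rw [he]
  simp

lemma match_all (hm : 1 ≤ m) (hπ : ∀ i, π i ≠ i ∧ π (π i) = i)
    (hav : ¬ contains31_2 (flat π)) :
    ∀ k, k < m → ∀ x : Fin (2*m), (x:ℕ) = lp (bits m π) k →
      ((π x : ℕ) = rp (bits m π) k) := by
  set b := bits m π with hbdef
  have hb : Hb m b := hb_bits
  intro k
  induction k using Nat.strong_induction_on with
  | _ k IH =>
    intro hk x hx
    obtain ⟨hP, hInv⟩ := struct' hm hb hπ k (le_of_lt hk) (fun j hj => IH j hj (by omega))
    have hcx : x = (⟨lp b k, lp_lt hk⟩ : Fin (2*m)) := Fin.ext hx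
    subst hcx
    set c : Fin (2*m) := (⟨lp b k, lp_lt hk⟩ : Fin (2*m)) with hcdef
    have hcval : (c:ℕ) = lp b k := rfl
    have hcle : (c:ℕ) ≤ 2*k := lp_le k
    set y := π c with hydef
    have hπy : π y = c := (hπ c).2
    have hcV : c ∉ Vf m b k := lp_not_mem_Vf hb rfl
    have hyni : y ∉ insert c (Vf m b k) := by
      rw [Finset.mem_insert]
      rintro (h | h)
      · exact (hπ c).1 h
      · have h2 := hInv _ h
        rw [hπy] at h2
        exact hcV h2
    have hyge : 2*k + 1 ≤ (y:ℕ) := by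
      have h := hyni
      rw [mem_insert_lp hb hk] at h
      omega
    show (y:ℕ) = rp b k
    rcases Nat.lt_or_ge (y:ℕ) (2*k+3) with hycase | hycase
    · have hy12 : (y:ℕ) = 2*k+1 ∨ (y:ℕ) = 2*k+2 := by omega
      rcases hy12 with hy1 | hy2
      · -- y = 2k+1 : show b (k+1) = false
        have hbk1 : b (k+1) = false := by
          by_cases hkm : k+1 < m
          · rw [Bool.eq_false_iff]
            intro htrue
            have h2 := (bits_eq_true (π := π) (by omega) hkm (x := y) (by omega)).mp htrue
            rw [hπy] at h2
            omega
          · exact hb.2 (k+1) (by omega)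
        rw [rp, hbk1]
        simpa using hy1
      · -- y = 2k+2 : show b (k+1) = true
        have hkm : k+1 < m := by have := y.isLt; omega
        set x1 : Fin (2*m) := ⟨2*k+1, by omega⟩ with hx1def
        set z := π x1 with hzdef
        have hπz : π z = x1 := (hπ x1).2
        have hz_not_le : ¬ (z:ℕ) ≤ 2*k := by
          intro hle
          have hz2 : z ∈ insert c (Vf m b k) := (mem_insert_lp hb hk z).mpr hle
          rw [Finset.mem_insert] at hz2
          rcases hz2 with hzc | hzV
          · -- z = c : then x1 = π c = y, values 2k+1 = 2k+2, absurd
            have h4 : (x1:ℕ) = (y:ℕ) := by rw [← hπz, hzc, ← hydef]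
            simp [hx1def] at h4
            omega
          · have h3 := hInv _ hzV
            rw [hπz, mem_Vf] at h3
            have : (x1:ℕ) = 2*k+1 := rfl
            have hlple := lp_le (b := b) k
            rcases h3 with h3 | h3 <;> omega
        have hzne1 : (z:ℕ) ≠ 2*k+1 := by
          intro h
          have h4 : z = x1 := Fin.ext h
          exact (hπ x1).1 (hzdef.symm.trans h4)
        have hzney : (z:ℕ) ≠ 2*k+2 := by
          intro h
          have hzy : z = y := Fin.ext (by omega)
          rw [hzy] at hπz
          rw [hπy] at hπz
          have : (c:ℕ) = 2*k+1 := by rw [hπz]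
          omega
        have hbk1 : b (k+1) = true := by
          refine (bits_eq_true (π := π) (by omega) hkm (x := x1) (by simp [hx1def]; omega)).mpr ?_
          rw [← hzdef]
          omega
        rw [rp, hbk1]
        simpa using hy2
    · -- y ≥ 2k+3 : contradiction with avoidance
      exfalso
      have hk2 : k + 2 ≤ m := by have := y.isLt; omega
      have hne := compl_nonempty hb hk
      have hRk : Rtail π b k = flatAux π (2*(m-k)) c (Vf m b k) := by
        rw [Rtail, dif_pos hne, min'_compl hb hk hne]
      have hfuel : 2*(m-k) = 2*(m-k-1) + 2 := by omega
      set V' := insert y (insert c (Vf m b k)) with hV'def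
      have hU : flatAux π (2*(m-k)) c (Vf m b k) =
          c :: y :: (if h : (univ \ V').Nonempty then
            flatAux π (2*(m-k-1)) ((univ \ V').min' h) V' else []) := by
        rw [hfuel, unfold2 hπ _ _ hInv c hcV]
      have hmemV' : ∀ w : Fin (2*m), w ∈ V' ↔ ((w:ℕ) = (y:ℕ) ∨ (w:ℕ) ≤ 2*k) := by
        intro w
        rw [hV'def, Finset.mem_insert, mem_insert_lp hb hk, Fin.ext_iff]
      set x1 : Fin (2*m) := ⟨2*k+1, by omega⟩ with hx1def
      have hx1V' : x1 ∉ V' := by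
        rw [hmemV']
        simp [hx1def]
        omega
      have h' : (univ \ V').Nonempty := ⟨x1, by rw [mem_sdiff]; exact ⟨mem_univ _, hx1V'⟩⟩
      set c' := (univ \ V').min' h' with hc'def
      have hc'le : (c':ℕ) ≤ 2*k+1 := by
        have h5 := Finset.min'_le _ _ (show x1 ∈ univ \ V' by
          rw [mem_sdiff]; exact ⟨mem_univ _, hx1V'⟩)
        rw [Fin.le_def] at h5
        exact h5
      have hinv' : ∀ w ∈ V', π w ∈ V' := by
        intro w hw
        rw [hV'def, Finset.mem_insert, Finset.mem_insert] at hw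
        rcases hw with rfl | rfl | hw
        · rw [hπy, hmemV']
          right; exact hcle
        · rw [← hydef, hmemV']
          left; rfl
        · have := hInv _ hw
          rw [hmemV']
          right
          rw [mem_Vf] at this
          have := lp_le (b := b) k
          omega
      have hcard' : (univ \ V').card ≤ 2*(m-k-1) := by
        have hVc : V'.card = 2*k + 2 := by
          rw [hV'def, Finset.card_insert_of_notMem hyni,
            Finset.card_insert_of_notMem hcV, Vf_card hb k (le_of_lt hk)]
        have : (univ \ V').card = 2*m - V'.card := by
          rw [Finset.card_sdiff_of_subset (Finset.subset_univ _), Finset.card_univ, Fintype.card_fin]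
        omega
      set x2 : Fin (2*m) := ⟨2*k+2, by omega⟩ with hx2def
      have hx2V' : x2 ∉ V' := by
        rw [hmemV']
        simp [hx2def]
        omega
      have hmem := mem_flatAux hπ (2*(m-k-1)) V' hinv' h' x2 hx2V' hcard'
      rw [← hc'def] at hmem
      set tail := flatAux π (2*(m-k-1)) c' V' with htaildef
      obtain ⟨ft, hft⟩ : ∃ ft, 2*(m-k-1) = ft + 1 := ⟨2*(m-k-1)-1, by omega⟩
      obtain ⟨rest, hrest⟩ : ∃ rest, tail = c' :: rest := by
        rw [htaildef, hft, flatAux]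
        exact ⟨_, rfl⟩
      rw [hrest] at hmem
      have hx2ne : x2 ≠ c' := by
        intro h
        have : (x2:ℕ) = (c':ℕ) := congrArg Fin.val h
        simp [hx2def] at this
        omega
      have hmem2 : x2 ∈ rest := by
        rcases List.mem_cons.mp hmem with h | h
        · exact absurd h hx2ne
        · exact h
      obtain ⟨q, hq, hqe⟩ := List.mem_iff_getElem.mp hmem2
      -- assemble the word
      have hflat : flat π = wordN b k ++
          (c :: y :: c' :: rest).map (fun x : Fin (2*m) => (x:ℕ)+1) := by
        rw [hP, hRk, hU, dif_pos h', ← hc'def, ← htaildef, hrest]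
      have hlen : (flat π).length = 2*k + 3 + rest.length := by
        rw [hflat]
        rw [List.length_append, wordN_length, List.length_map]
        simp
        omega
      have e1 : (flat π).getD (2*k+1) 0 = (y:ℕ)+1 := by
        rw [hflat, List.getD_append_right _ _ _ _ (by rw [wordN_length]; omega), wordN_length,
          show 2*k+1 - 2*k = 1 by omega]
        simp
      have e2 : (flat π).getD (2*k+2) 0 = (c':ℕ)+1 := by
        rw [hflat, List.getD_append_right _ _ _ _ (by rw [wordN_length]; omega), wordN_length,
          show 2*k+2 - 2*k = 2 by omega]
        simp
      have e3 : (flat π).getD (2*k+3+q) 0 = 2*k+3 := by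
        rw [hflat, List.getD_append_right _ _ _ _ (by rw [wordN_length]; omega), wordN_length,
          show 2*k+3+q - 2*k = q+1+1+1 by omega]
        simp only [List.map_cons, List.getD_cons_succ]
        rw [List.getD_eq_getElem _ _ (by rw [List.length_map]; exact hq)]
        rw [List.getElem_map, hqe]
      apply hav
      refine ⟨⟨2*k+1, by omega⟩, ⟨2*k+3+q, by omega⟩, by simp; omega, ?_, ?_⟩
      · show (flat π).getD (2*k+1+1) 0 < (flat π).getD (2*k+3+q) 0
        rw [show 2*k+1+1 = 2*k+2 by omega, e2, e3]
        omega
      · show (flat π).getD (2*k+3+q) 0 < (flat π).getD (2*k+1) 0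
        rw [e1, e3]
        omega

end FMAux

namespace FMAux

variable {m : ℕ} {b : ℕ → Bool} {π : Equiv.Perm (Fin (2*m))}

lemma recon (hm : 1 ≤ m) (hπ : ∀ i, π i ≠ i ∧ π (π i) = i)
    (hav : ¬ contains31_2 (flat π)) (hb : Hb m b) (hbe : b = bits m π) :
    π = σp b hb := by
  have hmatch : ∀ k, k < m → ∀ x : Fin (2*m), (x:ℕ) = lp b k → ((π x : ℕ) = rp b k) := by
    rw [hbe]; exact match_all hm hπ hav
  apply Equiv.ext
  intro x
  obtain ⟨k, hk, h | h⟩ := cover hb (x:ℕ) x.2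
  · exact Fin.ext (by rw [hmatch k hk x h, σp_match hb x h])
  · set u : Fin (2*m) := ⟨lp b k, lp_lt hk⟩ with hudef
    have hπu : π u = x := Fin.ext (by rw [hmatch k hk u rfl, ← h])
    have hσu : σp b hb u = x := Fin.ext (by rw [σp_match hb u rfl, ← h])
    calc π x = π (π u) := by rw [hπu]
    _ = u := (hπ u).2
    _ = σp b hb (σp b hb u) := ((σp_fpfinv hb) u).2.symm
    _ = σp b hb x := by rw [hσu]

lemma bits_σp (hb : Hb m b) : bits m (σp b hb) = b := by
  funext j
  by_cases h : 1 ≤ j ∧ j < m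
  · rw [bits, dif_pos h]
    rcases hbj : b j with _ | _
    · -- b j = false : 2j-1 = rp b (j-1), σp maps it to lp b (j-1) ≤ 2(j-1)
      have hx : (2*j-1 : ℕ) = rp b (j-1) := by
        simp [rp, show j-1+1 = j by omega, hbj]; omega
      have h2 : (σp b hb ⟨2*j-1, by omega⟩ : ℕ) = lp b (j-1) := by
        rw [σp_apply]
        show pf b (2*j-1) = _
        rw [hx, pf_rp hb]
      have h3 := lp_le (b := b) (j-1)
      simp only [decide_eq_false_iff_not, not_lt]
      omega
    · -- b j = true : 2j-1 = lp b j, σp maps it to rp b j ≥ 2j+1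
      have hx : (2*j-1 : ℕ) = lp b j := by simp [lp, hbj]
      have h2 : (σp b hb ⟨2*j-1, by omega⟩ : ℕ) = rp b j := by
        rw [σp_apply]
        show pf b (2*j-1) = _
        rw [hx, pf_lp hb]
      have h3 := rp_ge (b := b) j
      simp only [decide_eq_true_eq]
      omega
  · rw [bits, dif_neg h]
    have : b j = false := by
      rcases (by omega : j = 0 ∨ m ≤ j) with rfl | hj
      · exact hb.1
      · exact hb.2 j hj
    rw [this]

def bOf (m : ℕ) (f : Fin (m-1) → Bool) (j : ℕ) : Bool :=
  if h : 1 ≤ j ∧ j < m then f ⟨j-1, by omega⟩ else false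

lemma hb_bOf (f : Fin (m-1) → Bool) : Hb m (bOf m f) := by
  constructor
  · rw [bOf, dif_neg (by omega)]
  · intro j hj; rw [bOf, dif_neg (by omega)]

end FMAux

theorem stmt_5 (m : ℕ) (hm : 1 ≤ m) :
    (Finset.univ.filter
        (fun π : Equiv.Perm (Fin (2 * m)) =>
          (∀ i, π i ≠ i ∧ π (π i) = i) ∧ ¬ contains31_2 (flat π))).card
      = 2 ^ (m - 1) := by
  have hinj : Function.Injective
      (fun f : Fin (m-1) → Bool => FMAux.σp (FMAux.bOf m f) (FMAux.hb_bOf f)) := by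
    intro f f' hff
    simp only at hff
    have h1 : FMAux.bOf m f = FMAux.bOf m f' := by
      rw [← FMAux.bits_σp (FMAux.hb_bOf f), ← FMAux.bits_σp (FMAux.hb_bOf f'), hff]
    funext j
    have h2 := congrFun h1 ((j:ℕ)+1)
    have hcond : 1 ≤ (j:ℕ)+1 ∧ (j:ℕ)+1 < m := ⟨by omega, by have := j.2; omega⟩
    rw [FMAux.bOf, FMAux.bOf, dif_pos hcond, dif_pos hcond] at h2
    have he : (⟨(j:ℕ)+1-1, by omega⟩ : Fin (m-1)) = j := Fin.ext (by simp)
    rwa [he] at h2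
  have hS : (Finset.univ.filter
        (fun π : Equiv.Perm (Fin (2 * m)) =>
          (∀ i, π i ≠ i ∧ π (π i) = i) ∧ ¬ contains31_2 (flat π)))
      = Finset.image (fun f : Fin (m-1) → Bool => FMAux.σp (FMAux.bOf m f) (FMAux.hb_bOf f))
          Finset.univ := by
    ext π
    simp only [Finset.mem_image, Finset.mem_filter, Finset.mem_univ, true_and]
    constructor
    · rintro ⟨hπ, hav⟩
      refine ⟨fun j => FMAux.bits m π ((j:ℕ)+1), ?_⟩
      have hbe : FMAux.bOf m (fun j : Fin (m-1) => FMAux.bits m π ((j:ℕ)+1)) = FMAux.bits m π := by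
        funext j
        by_cases h : 1 ≤ j ∧ j < m
        · rw [FMAux.bOf, dif_pos h]
          show FMAux.bits m π (j-1+1) = FMAux.bits m π j
          rw [show j-1+1 = j by omega]
        · rw [FMAux.bOf, dif_neg h, FMAux.bits, dif_neg h]
      exact (FMAux.recon hm hπ hav _ hbe).symm
    · rintro ⟨f, rfl⟩
      refine ⟨FMAux.σp_fpfinv (FMAux.hb_bOf f), ?_⟩
      apply FMAux.not_contains_wordN (FMAux.hb_bOf f)
      exact FMAux.flat_matched hm (FMAux.hb_bOf f) (FMAux.σp_fpfinv _)
        (fun j hj x hx => FMAux.σp_match _ x hx)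
  rw [hS, Finset.card_image_of_injective _ hinj, Finset.card_univ]
  rw [Fintype.card_fun]
  simp
end

section
/- For every m ≥ 1, a perfect matching π of [2m] has flattened form π' = π_1⋯π_{2m} avoiding the vincular pattern 31-2 if and only if for every i with 1 ≤ i ≤ m-1, the pair (π_{2i}, π_{2i+1}) equals either (2i, 2i+1) or (2i+1, 2i). -/
open Finset Polynomial

open scoped Classical

lemma flatMap_coe {n : ℕ} (L : List (Fin n)) :
    (L.flatMap fun (a : Fin n) => [(a : ℕ)]) = L.map Fin.val := by
  induction L with
  | nil => rfl
  | cons a l ih => simp only [List.flatMap_cons, ih, List.map_cons, List.singleton_append]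

lemma flatAux_step {n : ℕ} (π : Equiv.Perm (Fin n))
    (hπ : ∀ i, π i ≠ i ∧ π (π i) = i) (f : ℕ) (visited : Finset (Fin n)) (cur : Fin n)
    (h2 : π cur ∉ visited) :
    flatAux π (f+2) cur visited =
      cur :: π cur ::
        (if h : (Finset.univ \ insert (π cur) (insert cur visited)).Nonempty then
          flatAux π f ((Finset.univ \ insert (π cur) (insert cur visited)).min' h)
            (insert (π cur) (insert cur visited))
        else []) := by
  have hne : π cur ∉ insert cur visited := by
    simp [Finset.mem_insert, (hπ cur).1, h2]
  have hmem : π (π cur) ∈ insert (π cur) (insert cur visited) := by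
    simp [(hπ cur).2, Finset.mem_insert]
  rw [show f + 2 = (f+1)+1 from rfl, flatAux, if_neg hne, flatAux, if_pos hmem]

lemma flatAux_spec_s6 {n : ℕ} (π : Equiv.Perm (Fin n))
    (hπ : ∀ i, π i ≠ i ∧ π (π i) = i) :
    ∀ fuel (visited : Finset (Fin n)) (cur : Fin n)
      (_ : ∀ x ∈ visited, π x ∈ visited)
      (hne : (Finset.univ \ visited).Nonempty)
      (_ : cur = (Finset.univ \ visited).min' hne)
      (_ : (Finset.univ \ visited).card ≤ fuel),
      (flatAux π fuel cur visited).length = (Finset.univ \ visited).card ∧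
      (∀ x, x ∈ flatAux π fuel cur visited ↔ x ∈ Finset.univ \ visited) ∧
      (flatAux π fuel cur visited).Nodup ∧
      (∀ k (hk : 2*k < (flatAux π fuel cur visited).length) x,
        x ∈ (flatAux π fuel cur visited).drop (2*k) →
        (flatAux π fuel cur visited).get ⟨2*k, hk⟩ ≤ x) := by
  intro fuel
  induction fuel using Nat.strong_induction_on with
  | _ fuel IH =>
  intro visited cur hclosed hne hcur hfuel
  have hcurS : cur ∈ Finset.univ \ visited := hcur ▸ Finset.min'_mem _ hne
  have hcurmin : ∀ x ∈ Finset.univ \ visited, cur ≤ x := by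
    intro x hx; rw [hcur]; exact Finset.min'_le _ x hx
  have hcurv : cur ∉ visited := (Finset.mem_sdiff.1 hcurS).2
  have hpcv : π cur ∉ visited := fun h => hcurv (by
    have := hclosed _ h; rwa [(hπ cur).2] at this)
  have hpcS : π cur ∈ Finset.univ \ visited :=
    Finset.mem_sdiff.2 ⟨Finset.mem_univ _, hpcv⟩
  have hnecur : cur ≠ π cur := fun h => (hπ cur).1 h.symm
  have hpair : ({cur, π cur} : Finset (Fin n)) ⊆ Finset.univ \ visited := by
    intro x hx
    rcases Finset.mem_insert.1 hx with rfl | hx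
    · exact hcurS
    · rw [Finset.mem_singleton] at hx; subst hx; exact hpcS
  have hcard2 : 2 ≤ (Finset.univ \ visited).card := by
    have := Finset.card_le_card hpair
    rwa [Finset.card_pair hnecur] at this
  obtain ⟨f, rfl⟩ : ∃ f, fuel = f + 2 := ⟨fuel - 2, by omega⟩
  set V2 := insert (π cur) (insert cur visited) with hV2
  have hS2 : Finset.univ \ V2 = (Finset.univ \ visited) \ {cur, π cur} := by
    ext x; simp [hV2, Finset.mem_sdiff, Finset.mem_insert]; tauto
  have hcardS2 : (Finset.univ \ V2).card = (Finset.univ \ visited).card - 2 := by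
    rw [hS2, Finset.card_sdiff_of_subset hpair, Finset.card_pair hnecur]
  have heq := flatAux_step π hπ f visited cur hpcv
  rw [heq]
  by_cases h2 : (Finset.univ \ V2).Nonempty
  · rw [dif_pos h2]
    have hclosed2 : ∀ x ∈ V2, π x ∈ V2 := by
      intro x hx
      simp only [hV2, Finset.mem_insert] at hx ⊢
      rcases hx with rfl | rfl | hx
      · right; left; exact (hπ cur).2
      · left; rfl
      · right; right; exact hclosed x hx
    have hfuel2 : (Finset.univ \ V2).card ≤ f := by rw [hcardS2]; omega
    obtain ⟨ihlen, ihmem, ihnd, ihmin⟩ :=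
      IH f (by omega) V2 ((Finset.univ \ V2).min' h2) hclosed2 h2 rfl hfuel2
    set L2 := flatAux π f ((Finset.univ \ V2).min' h2) V2 with hL2
    have hmemL2 : ∀ x, x ∈ L2 ↔ x ∈ (Finset.univ \ visited) \ {cur, π cur} := by
      intro x; rw [ihmem, hS2]
    refine ⟨?_, ?_, ?_, ?_⟩
    · simp only [List.length_cons, ihlen, hcardS2]; omega
    · intro x
      rw [List.mem_cons, List.mem_cons, hmemL2]
      constructor
      · rintro (rfl | rfl | hx)
        · exact hcurS
        · exact hpcS
        · exact (Finset.mem_sdiff.1 hx).1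
      · intro hx
        by_cases hc : x = cur
        · left; exact hc
        by_cases hp : x = π cur
        · right; left; exact hp
        · right; right
          refine Finset.mem_sdiff.2 ⟨hx, ?_⟩
          simp [hc, hp]
    · rw [List.nodup_cons, List.nodup_cons]
      refine ⟨?_, ?_, ihnd⟩
      · intro h
        rcases List.mem_cons.1 h with h | h
        · exact hnecur h
        · have := (hmemL2 _).1 h
          rw [Finset.mem_sdiff] at this
          exact this.2 (by simp)
      · intro h
        have := (hmemL2 _).1 h
        rw [Finset.mem_sdiff] at this
        exact this.2 (by simp)
    · intro k hk x hx
      match k with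
      | 0 =>
        simp only [Nat.mul_zero, List.drop_zero] at hx
        have hxS : x ∈ Finset.univ \ visited := by
          rcases List.mem_cons.1 hx with rfl | hx
          · exact hcurS
          rcases List.mem_cons.1 hx with rfl | hx
          · exact hpcS
          · exact (Finset.mem_sdiff.1 ((hmemL2 x).1 hx)).1
        simpa using hcurmin x hxS
      | k+1 =>
        have e1 : 2*(k+1) = 2*k + 1 + 1 := by ring
        simp only [List.length_cons, e1] at hk
        simp only [e1, List.drop_succ_cons] at hx
        have hk' : 2*k < L2.length := by omega
        have := ihmin k hk' x hx
        simp only [List.get_eq_getElem] at this ⊢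
        simpa only [e1, List.getElem_cons_succ] using this
  · rw [dif_neg h2]
    have hS2e : (Finset.univ \ visited) \ {cur, π cur} = ∅ := by
      rw [← hS2]; exact Finset.not_nonempty_iff_eq_empty.1 h2
    have hSeq : Finset.univ \ visited = {cur, π cur} := by
      apply Finset.Subset.antisymm
      · intro x hx; by_contra hxn
        exact (Finset.eq_empty_iff_forall_notMem.1 hS2e x)
          (Finset.mem_sdiff.2 ⟨hx, hxn⟩)
      · exact hpair
    have hScard : (Finset.univ \ visited).card = 2 := by
      rw [hSeq, Finset.card_pair hnecur]
    refine ⟨by simp [hScard], ?_, by simp [hnecur], ?_⟩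
    · intro x
      rw [hSeq]
      simp
    · intro k hk x hx
      match k with
      | 0 =>
        simp only [Nat.mul_zero, List.drop_zero] at hx
        have hxS : x ∈ Finset.univ \ visited := by
          rw [hSeq]
          rcases List.mem_cons.1 hx with rfl | hx
          · simp
          rcases List.mem_cons.1 hx with rfl | hx
          · simp
          · simp at hx
        simpa using hcurmin x hxS
      | k+1 => simp only [List.length_cons, List.length_nil] at hk; omega

theorem stmt_6 (m : ℕ) (hm : 1 ≤ m) (π : Equiv.Perm (Fin (2 * m)))
    (hπ : ∀ i, π i ≠ i ∧ π (π i) = i) :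
    ¬ contains31_2 (flat π) ↔
      ∀ i : ℕ, 1 ≤ i → i ≤ m - 1 →
        (((flat π).getD (2 * i - 1) 0 = 2 * i ∧ (flat π).getD (2 * i) 0 = 2 * i + 1) ∨
          ((flat π).getD (2 * i - 1) 0 = 2 * i + 1 ∧ (flat π).getD (2 * i) 0 = 2 * i)) := by
  have h0 : 0 < 2 * m := by omega
  have hne : (Finset.univ \ (∅ : Finset (Fin (2*m)))).Nonempty := by
    rw [Finset.sdiff_empty]
    exact ⟨⟨0, h0⟩, Finset.mem_univ _⟩
  have hcur : (⟨0, h0⟩ : Fin (2*m)) = (Finset.univ \ (∅ : Finset (Fin (2*m)))).min' hne := by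
    apply le_antisymm
    · apply Finset.le_min'
      intro y _
      exact Fin.mk_le_of_le_val (Nat.zero_le _)
    · exact Finset.min'_le _ _ (by simp)
  have hcards : (Finset.univ \ (∅ : Finset (Fin (2*m)))).card = 2*m := by simp
  obtain ⟨Llen, Lmem, Lnd, Lmin⟩ :=
    flatAux_spec_s6 π hπ (2*m) ∅ ⟨0, h0⟩ (by simp) hne hcur (by rw [hcards])
  set L := flatAux π (2*m) (⟨0, h0⟩ : Fin (2*m)) ∅ with hL
  rw [hcards] at Llen
  have hw : flat π = List.map (fun x : Fin (2*m) => (x : ℕ) + 1) L := by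
    rw [flat, dif_pos h0]
    show List.map (fun x : ℕ => x + 1) (L.flatMap fun (a : Fin (2*m)) => [(a : ℕ)]) = _
    rw [flatMap_coe, List.map_map]
    rfl
  have hwlen : (flat π).length = 2*m := by rw [hw, List.length_map, Llen]
  have hget : ∀ j (hj : j < 2*m),
      (flat π).getD j 0 = ((L[j]'(by rw [Llen]; exact hj) : Fin (2*m)) : ℕ) + 1 := by
    intro j hj
    rw [hw, List.getD_eq_getElem _ _ (by rw [List.length_map, Llen]; exact hj),
      List.getElem_map]
  have hv1 : ∀ j, j < 2*m → 1 ≤ (flat π).getD j 0 := by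
    intro j hj; rw [hget j hj]; omega
  have hinj : ∀ j j', j < 2*m → j' < 2*m →
      (flat π).getD j 0 = (flat π).getD j' 0 → j = j' := by
    intro j j' hj hj' he
    rw [hget j hj, hget j' hj'] at he
    have hval : (L[j]'(by rw [Llen]; exact hj) : Fin (2*m)) = L[j']'(by rw [Llen]; exact hj') :=
      Fin.val_injective (by omega)
    have := List.nodup_iff_injective_getElem.1 Lnd
      (a₁ := ⟨j, by rw [Llen]; exact hj⟩) (a₂ := ⟨j', by rw [Llen]; exact hj'⟩) hval
    exact Fin.mk.inj_iff.1 this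
  have hsurj : ∀ x, 1 ≤ x → x ≤ 2*m → ∃ j, j < 2*m ∧ (flat π).getD j 0 = x := by
    intro x hx1 hx2
    have hmem : (⟨x - 1, by omega⟩ : Fin (2*m)) ∈ L := (Lmem _).2 (by simp)
    obtain ⟨j, hj, hjv⟩ := List.mem_iff_getElem.1 hmem
    refine ⟨j, by rw [Llen] at hj; exact hj, ?_⟩
    rw [hget j (by rw [Llen] at hj; exact hj)]
    have : ((L[j]'hj : Fin (2*m)) : ℕ) = x - 1 := by rw [hjv]
    omega
  have hzero : (flat π).getD 0 0 = 1 := by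
    have hk0 : 2*0 < L.length := by rw [Llen]; omega
    have hmem0 : (⟨0, h0⟩ : Fin (2*m)) ∈ L.drop (2*0) := by
      rw [Nat.mul_zero, List.drop_zero]; exact (Lmem _).2 (by simp)
    have hle := Lmin 0 hk0 ⟨0, h0⟩ hmem0
    have hge : (⟨0, h0⟩ : Fin (2*m)) ≤ L.get ⟨2*0, hk0⟩ :=
      Fin.mk_le_of_le_val (Nat.zero_le _)
    have hLe : L.get ⟨2*0, hk0⟩ = ⟨0, h0⟩ := le_antisymm hle hge
    rw [hget 0 h0]
    have : (L[0]'(by rw [Llen]; exact h0) : Fin (2*m)) = ⟨0, h0⟩ := by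
      simpa using hLe
    rw [this]
  have hmono : ∀ k d, 2*k + d < 2*m →
      (flat π).getD (2*k) 0 ≤ (flat π).getD (2*k + d) 0 := by
    intro k d hkd
    have hk : 2*k < L.length := by rw [Llen]; omega
    have hd : d < (L.drop (2*k)).length := by
      rw [List.length_drop, Llen]; omega
    have hmemd : L[2*k+d]'(by rw [Llen]; exact hkd) ∈ L.drop (2*k) := by
      have := List.getElem_mem hd
      rwa [List.getElem_drop] at this
    have := Lmin k hk _ hmemd
    rw [List.get_eq_getElem] at this
    rw [hget (2*k) (by omega), hget (2*k+d) hkd]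
    have hvle : ((L[2*k]'hk : Fin (2*m)) : ℕ) ≤ ((L[2*k+d]'(by rw [Llen]; exact hkd) : Fin (2*m)) : ℕ) := this
    omega
  -- prefix lemma
  have prefixlem : ∀ i, 1 ≤ i → i ≤ m →
      (∀ j, 1 ≤ j → j < i →
        (((flat π).getD (2 * j - 1) 0 = 2 * j ∧ (flat π).getD (2 * j) 0 = 2 * j + 1) ∨
          ((flat π).getD (2 * j - 1) 0 = 2 * j + 1 ∧ (flat π).getD (2 * j) 0 = 2 * j))) →
      (∀ p, p < 2*i - 1 → (flat π).getD p 0 ≤ 2*i - 1) ∧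
      (∀ x, 1 ≤ x → x ≤ 2*i - 1 → ∃ p, p < 2*i - 1 ∧ (flat π).getD p 0 = x) := by
    intro i
    induction i with
    | zero => omega
    | succ i IH =>
      intro _ hile hpairs
      by_cases hi : i = 0
      · subst hi
        constructor
        · intro p hp
          have : p = 0 := by omega
          subst this
          rw [hzero]
        · intro x hx1 hx2
          exact ⟨0, by omega, by rw [hzero]; omega⟩
      · have h1i : 1 ≤ i := by omega
        obtain ⟨IHb, IHs⟩ := IH h1i (by omega)
          (fun j hj1 hj2 => hpairs j hj1 (by omega))
        have hpi := hpairs i h1i (by omega)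
        have hvals : ((flat π).getD (2*i - 1) 0 = 2*i ∧ (flat π).getD (2*i) 0 = 2*i+1) ∨
            ((flat π).getD (2*i - 1) 0 = 2*i+1 ∧ (flat π).getD (2*i) 0 = 2*i) := hpi
        constructor
        · intro p hp
          rcases lt_trichotomy p (2*i - 1) with h | h | h
          · have := IHb p h; omega
          · subst h; rcases hvals with ⟨h1, _⟩ | ⟨h1, _⟩ <;> omega
          · have : p = 2*i := by omega
            subst this
            rcases hvals with ⟨_, h2⟩ | ⟨_, h2⟩ <;> omega
        · intro x hx1 hx2
          by_cases hxs : x ≤ 2*i - 1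
          · obtain ⟨p, hp, hpv⟩ := IHs x hx1 hxs
            exact ⟨p, by omega, hpv⟩
          · by_cases hx2i : x = 2*i
            · subst hx2i
              rcases hvals with ⟨h1, h2⟩ | ⟨h1, h2⟩
              · exact ⟨2*i - 1, by omega, h1⟩
              · exact ⟨2*i, by omega, h2⟩
            · have : x = 2*i + 1 := by omega
              subst this
              rcases hvals with ⟨h1, h2⟩ | ⟨h1, h2⟩
              · exact ⟨2*i, by omega, h2⟩
              · exact ⟨2*i - 1, by omega, h1⟩
  -- key step
  have key : ∀ i, 1 ≤ i → i ≤ m - 1 →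
      (∀ j, 1 ≤ j → j < i →
        (((flat π).getD (2 * j - 1) 0 = 2 * j ∧ (flat π).getD (2 * j) 0 = 2 * j + 1) ∨
          ((flat π).getD (2 * j - 1) 0 = 2 * j + 1 ∧ (flat π).getD (2 * j) 0 = 2 * j))) →
      ¬ contains31_2 (flat π) →
      (((flat π).getD (2 * i - 1) 0 = 2 * i ∧ (flat π).getD (2 * i) 0 = 2 * i + 1) ∨
        ((flat π).getD (2 * i - 1) 0 = 2 * i + 1 ∧ (flat π).getD (2 * i) 0 = 2 * i)) := by
    intro i hi1 hi2 hprev hav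
    obtain ⟨Pb, Ps⟩ := prefixlem i hi1 (by omega) hprev
    set b := (flat π).getD (2*i - 1) 0 with hb
    have hib1 : 2*i - 1 < 2*m := by omega
    have hib2 : 2*i < 2*m := by omega
    have hbge : 2*i ≤ b := by
      by_contra hlt
      have hb1 : 1 ≤ b := hv1 _ hib1
      obtain ⟨p, hp, hpv⟩ := Ps b hb1 (by omega)
      have := hinj p (2*i-1) (by omega) hib1 (by rw [hpv])
      omega
    have hage : 2*i ≤ (flat π).getD (2*i) 0 := by
      by_contra hlt
      have ha1 : 1 ≤ (flat π).getD (2*i) 0 := hv1 _ hib2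
      obtain ⟨p, hp, hpv⟩ := Ps _ ha1 (by omega)
      have := hinj p (2*i) (by omega) hib2 (by rw [hpv])
      omega
    have hane : (flat π).getD (2*i) 0 ≠ b := by
      intro h
      have := hinj (2*i) (2*i-1) hib2 hib1 h
      omega
    -- helper: any value y with 2*i ≤ y ≤ 2*m, y ≠ b appears at position ≥ 2*i
    have hpos : ∀ y, 2*i ≤ y → y ≤ 2*m → y ≠ b →
        ∃ p, 2*i ≤ p ∧ p < 2*m ∧ (flat π).getD p 0 = y := by
      intro y hy1 hy2 hyb
      obtain ⟨p, hp, hpv⟩ := hsurj y (by omega) hy2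
      refine ⟨p, ?_, hp, hpv⟩
      by_contra hplt
      rcases lt_trichotomy p (2*i-1) with h | h | h
      · have := Pb p h; omega
      · subst h; exact hyb hpv.symm
      · omega
    rcases Nat.lt_or_ge b (2*i+2) with hbsm | hbbig
    · -- b = 2i or 2i+1
      rcases (by omega : b = 2*i ∨ b = 2*i+1) with hbeq | hbeq
      · left
        refine ⟨hbeq, ?_⟩
        obtain ⟨p, hp1, hp2, hpv⟩ := hpos (2*i+1) (by omega) (by omega) (by omega)
        obtain ⟨d, rfl⟩ : ∃ d, p = 2*i + d := ⟨p - 2*i, by omega⟩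
        have := hmono i d (by omega)
        rw [hpv] at this
        omega
      · right
        refine ⟨hbeq, ?_⟩
        obtain ⟨p, hp1, hp2, hpv⟩ := hpos (2*i) (by omega) (by omega) (by omega)
        obtain ⟨d, rfl⟩ : ∃ d, p = 2*i + d := ⟨p - 2*i, by omega⟩
        have := hmono i d (by omega)
        rw [hpv] at this
        omega
    · -- b ≥ 2i+2 : build a 31-2 pattern, contradiction
      exfalso
      have ha2i : (flat π).getD (2*i) 0 = 2*i := by
        obtain ⟨p, hp1, hp2, hpv⟩ := hpos (2*i) (by omega) (by omega) (by omega)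
        obtain ⟨d, rfl⟩ : ∃ d, p = 2*i + d := ⟨p - 2*i, by omega⟩
        have := hmono i d (by omega)
        rw [hpv] at this
        omega
      obtain ⟨p, hp1, hp2, hpv⟩ := hpos (2*i+1) (by omega) (by omega) (by omega)
      have hpne : p ≠ 2*i := by
        intro h; rw [h, ha2i] at hpv; omega
      apply hav
      refine ⟨⟨2*i - 1, by rw [hwlen]; omega⟩, ⟨p, by rw [hwlen]; exact hp2⟩, ?_, ?_, ?_⟩
      · simp only; omega
      · simp only
        rw [show 2*i - 1 + 1 = 2*i by omega, ha2i, hpv]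
        omega
      · simp only
        rw [hpv, ← hb]
        omega
  constructor
  · intro hav i hi1 hi2
    induction i using Nat.strong_induction_on with
    | _ i IH =>
      exact key i hi1 hi2 (fun j hj1 hj2 => IH j hj2 hj1 (by omega)) hav
  · rintro hR ⟨p, j, hpj, hlt1, hlt2⟩
    have hplen : (p : ℕ) < 2*m := p.isLt.trans_le hwlen.le
    have hjlen : (j : ℕ) < 2*m := j.isLt.trans_le hwlen.le
    rcases Nat.eq_zero_or_pos (p : ℕ) with hp0 | hppos
    · rw [hp0, hzero] at hlt2
      have := hv1 (j : ℕ) hjlen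
      omega
    · rcases Nat.even_or_odd (p : ℕ) with ⟨c, hc⟩ | ⟨c, hc⟩
      · -- p = 2c, c ≥ 1, even position (0-indexed), between pairs
        have hc1 : 1 ≤ c := by omega
        have hc2 : c ≤ m - 2 := by omega
        have hpair1 := hR c hc1 (by omega)
        have hpair2 := hR (c+1) (by omega) (by omega)
        have e1 : 2*(c+1) - 1 = (p : ℕ) + 1 := by omega
        have e2 : 2*c = (p : ℕ) := by omega
        rw [e1] at hpair2
        rw [e2] at hpair1
        rcases hpair1 with ⟨_, h1⟩ | ⟨_, h1⟩ <;>
          rcases hpair2 with ⟨h2, _⟩ | ⟨h2, _⟩ <;> omega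
      · -- p = 2c+1 odd; p = 2(c+1)-1 within pair c+1
        have hc2 : c + 1 ≤ m - 1 := by omega
        have hpair := hR (c+1) (by omega) hc2
        have e1 : 2*(c+1) - 1 = (p : ℕ) := by omega
        have e2 : 2*(c+1) = (p : ℕ) + 1 := by omega
        rw [e1, e2] at hpair
        rcases hpair with ⟨h1, h2⟩ | ⟨h1, h2⟩ <;> omega
end

section
/- Let w = w_1⋯w_n be a permutation word. Then w contains the classical pattern 2-3-1 (there exist i < j < k with w_k < w_i < w_j) if and only if w contains the vincular pattern 2-31 (there exist i < j with j+1 ≤ n, w_{j+1} < w_i < w_j). -/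
theorem stmt_9 (w : List ℕ) (hw : w.Perm (List.range' 1 w.length)) :
    (∃ i j k : Fin w.length, i < j ∧ j < k ∧
        w.getD (k : ℕ) 0 < w.getD (i : ℕ) 0 ∧ w.getD (i : ℕ) 0 < w.getD (j : ℕ) 0)
    ↔ (∃ i j : Fin w.length, (i : ℕ) < (j : ℕ) ∧ (j : ℕ) + 1 < w.length ∧
        w.getD ((j : ℕ) + 1) 0 < w.getD (i : ℕ) 0 ∧ w.getD (i : ℕ) 0 < w.getD (j : ℕ) 0) := by
  have hnd : w.Nodup := (hw.nodup_iff).mpr (List.nodup_range' (s := 1) (n := w.length))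
  constructor
  · rintro ⟨i, j, k, hij, hjk, hki, hij2⟩
    set x := w.getD (i : ℕ) 0 with hx
    have hinj : ∀ p : ℕ, p < w.length → p ≠ (i : ℕ) → w.getD p 0 ≠ x := by
      intro p hp hpne heq
      have : w[p] = w[(i : ℕ)] := by
        simpa [hx, List.getD_eq_getElem, hp, i.isLt] using heq
      exact hpne (hnd.getElem_inj_iff.mp this)
    have key : ∀ d m, (k : ℕ) - m = d → (i : ℕ) < m → m < (k : ℕ) →
        x < w.getD m 0 →
        ∃ m', (i : ℕ) < m' ∧ m' + 1 < w.length ∧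
          w.getD (m' + 1) 0 < x ∧ x < w.getD m' 0 := by
      intro d
      induction d using Nat.strong_induction_on with
      | _ d ih =>
        intro m hd him hmk hxm
        have hm1len : m + 1 < w.length := lt_of_le_of_lt hmk k.isLt
        by_cases hlt : w.getD (m + 1) 0 < x
        · exact ⟨m, him, hm1len, hlt, hxm⟩
        · have hne : w.getD (m + 1) 0 ≠ x :=
            hinj (m + 1) hm1len (by omega)
          have hgt : x < w.getD (m + 1) 0 := lt_of_le_of_ne (not_lt.mp hlt) (Ne.symm hne)
          have hm1k : m + 1 < (k : ℕ) := by
            rcases Nat.lt_or_ge (m + 1) (k : ℕ) with h | h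
            · exact h
            · have heqk : m + 1 = (k : ℕ) := le_antisymm (Nat.succ_le_of_lt hmk) h
              rw [heqk] at hgt; omega
          exact ih ((k : ℕ) - (m + 1)) (by omega) (m + 1) rfl (by omega) hm1k hgt
    obtain ⟨m, him, hm1, hlt1, hlt2⟩ :=
      key ((k : ℕ) - (j : ℕ)) (j : ℕ) rfl hij hjk hij2
    exact ⟨i, ⟨m, by omega⟩, him, hm1, hlt1, hlt2⟩
  · rintro ⟨i, j, hij, hj1, h1, h2⟩
    exact ⟨i, j, ⟨⟨j + 1, hj1⟩, hij, Nat.lt_succ_self _, h1, h2⟩⟩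
end

section
/- Let w = w_1⋯w_n be a permutation word. Then w contains the classical pattern 2-1-3 (there exist i < j < k with w_j < w_i < w_k) if and only if w contains the vincular pattern 2-13 (there exist i < j with j+1 ≤ n and w_j < w_i < w_{j+1}). -/
lemma cross_aux (P : ℕ → Prop) : ∀ {a b : ℕ}, a ≤ b → P a → ¬ P b →
    ∃ m, a ≤ m ∧ m < b ∧ P m ∧ ¬ P (m+1) := by
  intro a b
  induction b with
  | zero =>
    intro hab ha hb
    exact absurd ha (by
      have h0 : a = 0 := by omega
      rw [h0]; exact hb)
  | succ b ih =>
    intro hab ha hb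
    rcases Nat.lt_or_ge a (b+1) with h | h
    · by_cases hPb : P b
      · exact ⟨b, by omega, by omega, hPb, hb⟩
      · obtain ⟨m, h1, h2, h3, h4⟩ := ih (by omega) ha hPb
        exact ⟨m, h1, by omega, h3, h4⟩
    · exact absurd ha (by
        have h0 : a = b + 1 := by omega
        rw [h0]; exact hb)

theorem stmt_10 (w : List ℕ) (hw : w.Perm (List.range' 1 w.length)) :
    (∃ i j k : Fin w.length, i < j ∧ j < k ∧
        w.getD (j : ℕ) 0 < w.getD (i : ℕ) 0 ∧ w.getD (i : ℕ) 0 < w.getD (k : ℕ) 0)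
    ↔ (∃ i j : Fin w.length, (i : ℕ) < (j : ℕ) ∧ (j : ℕ) + 1 < w.length ∧
        w.getD (j : ℕ) 0 < w.getD (i : ℕ) 0 ∧ w.getD (i : ℕ) 0 < w.getD ((j : ℕ) + 1) 0) := by
  have hnd : w.Nodup := hw.nodup_iff.mpr (List.nodup_range' (h := Nat.one_pos))
  constructor
  · rintro ⟨i, j, k, hij, hjk, h1, h2⟩
    obtain ⟨m, hm1, hm2, hm3, hm4⟩ := cross_aux (fun m => w.getD m 0 < w.getD (i:ℕ) 0)
      (le_of_lt hjk) h1 (not_lt.mpr (le_of_lt h2))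
    have hm1lt : m + 1 < w.length := by omega
    refine ⟨i, ⟨m, by omega⟩, by simp; omega, by simpa using hm1lt, hm3, ?_⟩
    rcases lt_or_eq_of_le (not_lt.mp hm4) with h | h
    · exact h
    · exfalso
      have hne : (m+1) ≠ (i:ℕ) := by omega
      apply hne
      have := List.Nodup.getElem_inj_iff hnd (i := m+1) (j := (i:ℕ)) (hi := hm1lt) (hj := i.2)
      rw [← this]
      rw [List.getD_eq_getElem w 0 hm1lt, List.getD_eq_getElem w 0 i.2] at h
      exact h.symm
  · rintro ⟨i, j, hij, hj1, h1, h2⟩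
    exact ⟨i, j, ⟨j+1, hj1⟩, hij, by simp [Fin.lt_def], h1, h2⟩
end

section
/- Let π be a derangement of [n], n ≥ 3, whose flattened form π' avoids the vincular pattern 12-3. Then the second letter of π' equals n. -/
open Finset Polynomial

open scoped Classical

def contains12_3 (w : List ℕ) : Prop :=
  ∃ i j : Fin w.length, (i : ℕ) + 1 < (j : ℕ) ∧
    w.getD (i : ℕ) 0 < w.getD ((i : ℕ) + 1) 0 ∧ w.getD ((i : ℕ) + 1) 0 < w.getD (j : ℕ) 0

lemma flatAux_complete {n : ℕ} (π : Equiv.Perm (Fin n)) :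
    ∀ (fuel : ℕ) (visited : Finset (Fin n)) (cur : Fin n), cur ∉ visited →
      (Finset.univ \ visited).card ≤ fuel →
      ∀ x, x ∉ visited → x ∈ flatAux π fuel cur visited := by
  intro fuel
  induction fuel with
  | zero =>
    intro visited cur hcur hcard x hx
    exfalso
    have : cur ∈ Finset.univ \ visited := by simp [hcur]
    have := Finset.card_pos.mpr ⟨cur, this⟩
    omega
  | succ m ih =>
    intro visited cur hcur hcard x hx
    have hcard' : (Finset.univ \ insert cur visited).card ≤ m := by
      have h1 : Finset.univ \ insert cur visited = (Finset.univ \ visited).erase cur := by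
        ext y; simp [and_comm, eq_comm]
      have h2 : cur ∈ Finset.univ \ visited := by simp [hcur]
      rw [h1, Finset.card_erase_of_mem h2]
      omega
    rw [flatAux]
    by_cases hxc : x = cur
    · simp [hxc]
    have hx' : x ∉ insert cur visited := by simp [hxc, hx]
    right
    by_cases hpc : π cur ∈ insert cur visited
    · rw [if_pos hpc]
      have hne : (Finset.univ \ insert cur visited).Nonempty :=
        ⟨x, by simp [hx']⟩
      rw [dif_pos hne]
      exact ih _ _ (by
        have := Finset.min'_mem _ hne
        simp only [Finset.mem_sdiff] at this
        exact this.2) hcard' x hx'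
    · rw [if_neg hpc]
      exact ih _ _ hpc hcard' x hx'

lemma flat_eq_map {n : ℕ} (π : Equiv.Perm (Fin n)) (h : 0 < n) :
    flat π = (flatAux π n ⟨0, h⟩ ∅).map (fun x : Fin n => (x : ℕ) + 1) := by
  rw [flat, dif_pos h]
  generalize flatAux π n ⟨0, h⟩ ∅ = L
  induction L with
  | nil => rfl
  | cons c t ih => simp_all [List.pure_def, List.bind_eq_flatMap]

theorem stmt_12 (n : ℕ) (hn : 3 ≤ n) (π : Equiv.Perm (Fin n))
    (hd : isDerangement π) (hav : ¬ contains12_3 (flat π)) :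
    (flat π).getD 1 0 = n := by
  have hpos : 0 < n := by omega
  have hπz : π ⟨0, hpos⟩ ∉ insert (⟨0, hpos⟩ : Fin n) (∅ : Finset (Fin n)) := by
    simp [hd ⟨0, hpos⟩]
  have key : ∀ f : ℕ, 2 ≤ f → ∃ t : List (Fin n),
      flatAux π f ⟨0, hpos⟩ ∅ = ⟨0, hpos⟩ :: π ⟨0, hpos⟩ :: t := by
    intro f hf
    obtain ⟨g, rfl⟩ : ∃ g, f = g + 1 + 1 := ⟨f - 2, by omega⟩
    rw [flatAux, if_neg hπz, flatAux]
    exact ⟨_, rfl⟩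
  obtain ⟨t, ht⟩ := key n (by omega)
  have hflat : flat π = 1 :: ((π ⟨0, hpos⟩ : ℕ) + 1) ::
      List.map (fun x : Fin n => (x : ℕ) + 1) t := by
    rw [flat_eq_map π hpos, ht]; rfl
  have hπz0 : (π ⟨0, hpos⟩ : ℕ) ≠ 0 := by
    intro hh
    exact hd ⟨0, hpos⟩ (by apply Fin.ext; simpa using hh)
  have hπzlt : (π ⟨0, hpos⟩ : ℕ) < n := (π ⟨0, hpos⟩).2
  have hg1 : (flat π).getD 1 0 = (π ⟨0, hpos⟩ : ℕ) + 1 := by rw [hflat]; rfl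
  by_cases hcase : (π ⟨0, hpos⟩ : ℕ) = n - 1
  · rw [hg1, hcase]; omega
  · exfalso
    apply hav
    have htopmem : (⟨n - 1, by omega⟩ : Fin n) ∈ flatAux π n ⟨0, hpos⟩ ∅ :=
      flatAux_complete π n ∅ ⟨0, hpos⟩ (by simp) (by simp) _ (by simp)
    rw [ht] at htopmem
    obtain ⟨k, hk, hkeq⟩ := List.mem_iff_getElem.mp htopmem
    have hk2 : 2 ≤ k := by
      by_contra h
      interval_cases k
      · have := congrArg Fin.val hkeq
        simp at this
        omega
      · have := congrArg Fin.val hkeq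
        simp at this
        exact hcase this
    obtain ⟨j, rfl⟩ : ∃ j, k = j + 1 + 1 := ⟨k - 2, by omega⟩
    simp only [List.getElem_cons_succ] at hkeq
    have hjlen : j < t.length := by simpa using hk
    have hkval : (flat π).getD (j + 1 + 1) 0 = n := by
      rw [hflat]
      simp only [List.getD_cons_succ]
      rw [List.getD_eq_getElem _ _ (by simpa using hjlen), List.getElem_map]
      have := congrArg Fin.val hkeq
      simp at this
      omega
    have hklen : j + 1 + 1 < (flat π).length := by rw [hflat]; simpa using hjlen
    have h0len : 0 < (flat π).length := by omega
    have hg0 : (flat π).getD 0 0 = 1 := by rw [hflat]; rfl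
    refine ⟨⟨0, h0len⟩, ⟨j + 1 + 1, hklen⟩, by simp, ?_, ?_⟩
    · show (flat π).getD 0 0 < (flat π).getD 1 0
      rw [hg0, hg1]
      omega
    · show (flat π).getD 1 0 < (flat π).getD (j + 1 + 1) 0
      rw [hg1, hkval]
      omega
end

section
/- For all integers a ≥ 0 and b ≥ 1, the coefficient of x^a in C(x)^b equals (b/(a+b))·binom(2a+b-1, a), where C(x) = Σ_{n≥0} C_n x^n is the generating function of the Catalan numbers, satisfying x·C(x)^2 = C(x) - 1. -/
open PowerSeries

private noncomputable def Cgf : PowerSeries ℚ := PowerSeries.mk fun n => (catalan n : ℚ)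

private lemma Cgf_eq : Cgf = 1 + PowerSeries.X * Cgf ^ 2 := by
  ext n
  cases n with
  | zero => simp [Cgf]
  | succ n =>
    rw [map_add, PowerSeries.coeff_succ_X_mul, sq, PowerSeries.coeff_mul]
    simp [Cgf, catalan_succ', PowerSeries.coeff_one]

private lemma cat_cast (n : ℕ) : (catalan n : ℚ) = ((2 * n).choose n : ℚ) / (n + 1) := by
  have h := succ_mul_catalan_eq_centralBinom n
  have : ((n : ℚ) + 1) * catalan n = (2 * n).choose n := by
    exact_mod_cast congrArg (Nat.cast : ℕ → ℚ) h
  field_simp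
  linarith [this]

private lemma key_s15 : ∀ a b : ℕ,
    PowerSeries.coeff a (Cgf ^ (b + 1))
      = ((b : ℚ) + 1) / (a + b + 1) * ((2 * a + b).choose a) := by
  intro a
  induction a with
  | zero =>
    intro b
    simp [PowerSeries.coeff_zero_eq_constantCoeff, map_pow]
    have : PowerSeries.constantCoeff Cgf = 1 := by simp [Cgf]
    rw [this]
    field_simp
    simp
  | succ a ih =>
    intro b
    induction b with
    | zero =>
      simp only [zero_add, pow_one, Nat.add_zero, Nat.cast_zero]
      have : PowerSeries.coeff (a + 1) Cgf = catalan (a + 1) := by simp [Cgf]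
      rw [this, cat_cast]
      push_cast
      ring_nf
    | succ b ihb =>
      have step : Cgf ^ (b + 2) = Cgf ^ (b + 1) + PowerSeries.X * Cgf ^ (b + 3) := by
        calc Cgf ^ (b + 2) = Cgf ^ (b + 1) * Cgf := by ring
        _ = Cgf ^ (b + 1) * (1 + PowerSeries.X * Cgf ^ 2) := by rw [← Cgf_eq]
        _ = Cgf ^ (b + 1) + PowerSeries.X * Cgf ^ (b + 3) := by ring
      have h2 := ih (b + 2)
      rw [step, map_add, PowerSeries.coeff_succ_X_mul, ihb, h2]
      have hp : (2 * (a + 1) + (b + 1)).choose (a + 1)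
          = (2 * a + (b + 2)).choose a + (2 * a + (b + 2)).choose (a + 1) := by
        have : 2 * (a + 1) + (b + 1) = (2 * a + (b + 2)) + 1 := by ring
        rw [this, Nat.choose_succ_succ' (2 * a + (b + 2)) a]
      have hr : ((2 * a + (b + 2)).choose (a + 1) : ℚ) * (a + 1)
          = ((2 * a + (b + 2)).choose a : ℚ) * (a + b + 2) := by
        have := Nat.choose_succ_right_eq (2 * a + (b + 2)) a
        have hsub : 2 * a + (b + 2) - a = a + b + 2 := by omega
        rw [hsub] at this
        exact_mod_cast congrArg (Nat.cast : ℕ → ℚ) this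
      rw [hp]
      have ha1 : ((a : ℚ) + 1) ≠ 0 := by positivity
      have hY : ((2 * a + (b + 2)).choose (a + 1) : ℚ)
          = ((2 * a + (b + 2)).choose a : ℚ) * (a + b + 2) / (a + 1) := by
        field_simp
        linarith [hr]
      have hn : 2 * (a + 1) + b = 2 * a + (b + 2) := by ring
      rw [hn]
      push_cast
      rw [hY]
      have d1 : ((a : ℚ) + 1 + b + 1) ≠ 0 := by positivity
      have d3 : ((a : ℚ) + 1 + (b + 1) + 1) ≠ 0 := by positivity
      field_simp
      ring

theorem stmt_15 (a b : ℕ) (hb : 1 ≤ b) :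
    PowerSeries.coeff a ((PowerSeries.mk fun n => (catalan n : ℚ)) ^ b)
      = ((b : ℚ) / (a + b)) * ((2 * a + b - 1).choose a) := by
  obtain ⟨b, rfl⟩ : ∃ b', b = b' + 1 := ⟨b - 1, by omega⟩
  have h := key_s15 a b
  have he : 2 * a + (b + 1) - 1 = 2 * a + b := by omega
  rw [he]
  rw [show (PowerSeries.mk fun n => (catalan n : ℚ)) = Cgf from rfl, h]
  push_cast
  ring_nf
end
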